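/- arXiv:math/0403278 — 10 statements merged into one kernel-verified Lean document; each statement's English description precedes it below -/
import Mathlib

section
/- For every finite set A ⊆ {0,1}^n, the cardinality of A is at most 1 plus the number of nonempty subsets I ⊆ {1,...,n} for which the coordinate projection of A onto I equals all of {0,1}^I. -/
open Classical in
/-- **Pajor's inequality.** `#A` is at most `1` plus the number of nonempty
coordinate sets `I` such that the projection of `A` onto `I` is all of `{0,1}^I`. -/
theorem pajor (n : ℕ) (A : Finset (Fin n → Bool)) :
    A.card ≤ 1 +
      ((Finset.univ : Finset (Finset (Fin n))).filter
        (fun I => I.Nonempty ∧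
          ∀ f : Fin n → Bool, ∃ a ∈ A, ∀ i ∈ I, a i = f i)).card := by
  classical
  set supp : (Fin n → Bool) → Finset (Fin n) :=
    fun a => Finset.univ.filter (fun i => a i = true) with hsupp
  have hsupp_mem : ∀ a i, (i ∈ supp a ↔ a i = true) := by
    intro a i; simp [hsupp]
  have hinj : Function.Injective supp := by
    intro a b hab
    funext i
    have h := congrArg (i ∈ ·) hab
    simp only [hsupp_mem] at h
    cases ha : a i <;> cases hb : b i <;> simp_all
  set 𝒜 : Finset (Finset (Fin n)) := A.image supp with h𝒜
  have hcard : A.card = 𝒜.card := (Finset.card_image_of_injective A hinj).symm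
  have hpajor := Finset.card_le_card_shatterer 𝒜
  set T := ((Finset.univ : Finset (Finset (Fin n))).filter
        (fun I => I.Nonempty ∧
          ∀ f : Fin n → Bool, ∃ a ∈ A, ∀ i ∈ I, a i = f i)) with hT
  have hsub : 𝒜.shatterer ⊆ insert ∅ T := by
    intro I hI
    rw [Finset.mem_shatterer] at hI
    rcases Finset.eq_empty_or_nonempty I with rfl | hne
    · exact Finset.mem_insert_self _ _
    · refine Finset.mem_insert_of_mem ?_
      rw [hT, Finset.mem_filter]
      refine ⟨Finset.mem_univ _, hne, ?_⟩
      intro f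
      obtain ⟨u, hu, hIu⟩ := hI (Finset.filter_subset (fun i => f i = true) I)
      rw [h𝒜, Finset.mem_image] at hu
      obtain ⟨a, ha, rfl⟩ := hu
      refine ⟨a, ha, ?_⟩
      intro i hi
      have h1 : i ∈ I ∩ supp a ↔ i ∈ I.filter (fun i => f i = true) := by rw [hIu]
      simp only [Finset.mem_inter, Finset.mem_filter, hsupp_mem] at h1
      cases hai : a i <;> cases hfi : f i <;> simp_all
  calc A.card = 𝒜.card := hcard
    _ ≤ 𝒜.shatterer.card := hpajor
    _ ≤ (insert ∅ T).card := Finset.card_le_card hsub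
    _ ≤ 1 + T.card := by
        have := Finset.card_insert_le (∅ : Finset (Fin n)) T
        omega
end

section
/- For every finite set A ⊆ ℤ^n, #A ≤ 1 + Σ_I #(integer boxes contained in P_I A), where the sum is over all nonempty subsets I ⊆ {1,...,n} and P_I denotes coordinate projection onto ℤ^I. -/
/-!
Counting the empty index set too (`boxCount A ∅ = 1` for nonempty `A`), we show
`#A ≤ ∑_I boxCount A I` by strong induction on `A`. If `A` has two points, pick a coordinate `j`
where they differ and cut `A` into the proper subsets `A_v = {x ∈ A | x j = v}`. These sections
have no boxes over any `I ∋ j`, and for `j ∉ I` a box `ab` over `I` that occurs in the sections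
`v₁ < ⋯ < v_k` is one box of `A` over `I` together with `k - 1` distinct boxes `ab × {v₁, vᵢ}`
of `A` over `insert j I`. Summing the bounds for the sections gives the bound for `A`.
-/

open Finset

/-- The number of integer boxes contained in the projection of `A` onto the
coordinates in `I`.  A box is recorded by its pair of "corner" functions
`(a, b)` with `a i < b i` for all `i ∈ I`; the box is `∏_{i∈I} {a i, b i}`,
and it is contained in `P_I A` iff every corner `c` of the box is the
restriction to `I` of some element of `A`. -/
noncomputable def boxCount {n : ℕ} (A : Finset (Fin n → ℤ)) (I : Finset (Fin n)) : ℕ :=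
  Set.ncard {ab : ({i // i ∈ I} → ℤ) × ({i // i ∈ I} → ℤ) |
    (∀ i, ab.1 i < ab.2 i) ∧
    ∀ c : {i // i ∈ I} → ℤ, (∀ i, c i = ab.1 i ∨ c i = ab.2 i) →
      ∃ x ∈ A, ∀ i : {i // i ∈ I}, x i.1 = c i}

theorem Finset.sum_univ_finset_eq_sum_powerset_erase {α M : Type*} [Fintype α] [DecidableEq α]
    [AddCommMonoid M] (a : α) (f : Finset α → M) :
    ∑ t, f t = ∑ t ∈ (univ.erase a).powerset, (f t + f (insert a t)) := by
  rw [← powerset_univ, ← insert_erase (mem_univ a), sum_powerset_insert (notMem_erase a univ),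
    sum_add_distrib, insert_erase (mem_univ a)]

namespace BoxCount

variable {n : ℕ} {A : Finset (Fin n → ℤ)} {I : Finset (Fin n)} {j : Fin n}

def boxes (A : Finset (Fin n → ℤ)) (I : Finset (Fin n)) :
    Set (({i // i ∈ I} → ℤ) × ({i // i ∈ I} → ℤ)) :=
  {ab | (∀ i, ab.1 i < ab.2 i) ∧
    ∀ c : {i // i ∈ I} → ℤ, (∀ i, c i = ab.1 i ∨ c i = ab.2 i) →
      ∃ x ∈ A, ∀ i : {i // i ∈ I}, x i.1 = c i}

theorem boxes_finite (A : Finset (Fin n → ℤ)) (I : Finset (Fin n)) : (boxes A I).Finite := by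
  have hP := A.finite_toSet.image fun x (i : {i // i ∈ I}) => x i.1
  refine (hP.prod hP).subset ?_
  rintro ⟨a, b⟩ ⟨-, hcorner⟩
  obtain ⟨x, hx, hxa⟩ := hcorner a fun _ => Or.inl rfl
  obtain ⟨y, hy, hyb⟩ := hcorner b fun _ => Or.inr rfl
  exact ⟨⟨x, hx, funext hxa⟩, ⟨y, hy, funext hyb⟩⟩

noncomputable def boxFinset (A : Finset (Fin n → ℤ)) (I : Finset (Fin n)) :
    Finset (({i // i ∈ I} → ℤ) × ({i // i ∈ I} → ℤ)) :=
  (boxes_finite A I).toFinset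

@[simp]
theorem mem_boxFinset {ab} : ab ∈ boxFinset A I ↔ ab ∈ boxes A I :=
  Set.Finite.mem_toFinset _

theorem boxCount_eq_card (A : Finset (Fin n → ℤ)) (I : Finset (Fin n)) :
    boxCount A I = #(boxFinset A I) :=
  Set.ncard_eq_toFinset_card _ (boxes_finite A I)

theorem boxes_mono {B : Finset (Fin n → ℤ)} (h : A ⊆ B) : boxes A I ⊆ boxes B I := by
  rintro ab ⟨hlt, hcorner⟩
  refine ⟨hlt, fun c hc => ?_⟩
  obtain ⟨x, hx, hxc⟩ := hcorner c hc
  exact ⟨x, h hx, hxc⟩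

theorem boxes_filter_eq_empty (hj : j ∈ I) (v : ℤ) : boxes {x ∈ A | x j = v} I = ∅ := by
  refine Set.eq_empty_of_forall_notMem fun ab ⟨hlt, hcorner⟩ => ?_
  obtain ⟨x, hx, hxa⟩ := hcorner ab.1 fun _ => Or.inl rfl
  obtain ⟨y, hy, hyb⟩ := hcorner ab.2 fun _ => Or.inr rfl
  have := hlt ⟨j, hj⟩
  rw [← hxa ⟨j, hj⟩, ← hyb ⟨j, hj⟩, (mem_filter.mp hx).2, (mem_filter.mp hy).2] at this
  exact lt_irrefl v this

theorem boxCount_filter_eq_zero (hj : j ∈ I) (v : ℤ) : boxCount {x ∈ A | x j = v} I = 0 := by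
  rw [boxCount, ← boxes, boxes_filter_eq_empty hj, Set.ncard_empty]

theorem boxCount_empty_le_one (A : Finset (Fin n → ℤ)) : boxCount A ∅ ≤ 1 :=
  Set.ncard_le_one_of_subsingleton _

theorem boxCount_empty_eq_one (hA : A.Nonempty) : boxCount A ∅ = 1 := by
  have huniv : boxes A ∅ = Set.univ := by
    refine Set.eq_univ_of_forall fun ab => ⟨fun i => absurd i.2 (notMem_empty _), fun c _ => ?_⟩
    obtain ⟨x, hx⟩ := hA
    exact ⟨x, hx, fun i => absurd i.2 (notMem_empty _)⟩
  rw [boxCount, ← boxes, huniv, Set.ncard_univ, Nat.card_unique]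

def extend (j : Fin n) (a : {i // i ∈ I} → ℤ) (t : ℤ) : {i // i ∈ insert j I} → ℤ :=
  fun i => if h : i.1 ∈ I then a ⟨i.1, h⟩ else t

abbrev restrictInsert (j : Fin n) (I : Finset (Fin n)) :
    ({i // i ∈ insert j I} → ℤ) → {i // i ∈ I} → ℤ :=
  fun c i => c ⟨i.1, mem_insert_of_mem i.2⟩

@[simp]
theorem restrictInsert_extend (a : {i // i ∈ I} → ℤ) (t : ℤ) :
    restrictInsert j I (extend j a t) = a := by
  funext i
  simp [extend, i.2]

theorem extend_apply_self (hj : j ∉ I) (a : {i // i ∈ I} → ℤ) (t : ℤ) :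
    extend j a t ⟨j, mem_insert_self j I⟩ = t :=
  dif_neg hj

theorem extend_mem_boxes (hj : j ∉ I) {ab : ({i // i ∈ I} → ℤ) × ({i // i ∈ I} → ℤ)} {s t : ℤ}
    (hst : s < t) (hs : ab ∈ boxes {x ∈ A | x j = s} I) (ht : ab ∈ boxes {x ∈ A | x j = t} I) :
    (extend j ab.1 s, extend j ab.2 t) ∈ boxes A (insert j I) := by
  refine ⟨fun ⟨i, _⟩ => ?_, fun c hc => ?_⟩
  · by_cases h : i ∈ I
    · simpa [extend, h] using hs.1 ⟨i, h⟩
    · simpa [extend, h] using hst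
  have hcI : ∀ i, restrictInsert j I c i = ab.1 i ∨
      restrictInsert j I c i = ab.2 i := fun i => by
    simpa [extend, i.2] using hc ⟨i.1, mem_insert_of_mem i.2⟩
  have hcj : c ⟨j, mem_insert_self j I⟩ = s ∨ c ⟨j, mem_insert_self j I⟩ = t := by
    simpa only [extend_apply_self hj] using hc ⟨j, mem_insert_self j I⟩
  obtain ⟨x, hx, hxc⟩ : ∃ x ∈ {x ∈ A | x j = c ⟨j, mem_insert_self j I⟩},
      ∀ i : {i // i ∈ I}, x i.1 = restrictInsert j I c i := by
    rcases hcj with h | h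
    · rw [h]; exact hs.2 _ hcI
    · rw [h]; exact ht.2 _ hcI
  refine ⟨x, (mem_filter.mp hx).1, fun ⟨i, hi⟩ => ?_⟩
  by_cases h : i ∈ I
  · exact hxc ⟨i, h⟩
  · obtain rfl := (mem_insert.mp hi).resolve_right h
    exact (mem_filter.mp hx).2

open Classical in
/-- If `m` is the least section containing `ab`, the boxes `ab × {m, t}` for the other sections
`t` are distinct. -/
theorem card_filter_mem_boxes_le (hj : j ∉ I) (S : Finset ℤ)
    (ab : ({i // i ∈ I} → ℤ) × ({i // i ∈ I} → ℤ)) :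
    #{v ∈ S | ab ∈ boxes {x ∈ A | x j = v} I} ≤
      1 + #{p ∈ boxFinset A (insert j I) |
        Prod.map (restrictInsert j I) (restrictInsert j I) p = ab} := by
  set W := {v ∈ S | ab ∈ boxes {x ∈ A | x j = v} I}
  rcases W.eq_empty_or_nonempty with hW | hW
  · simp [hW]
  set m := W.min' hW
  have hm : m ∈ W := W.min'_mem hW
  rw [← card_erase_add_one hm, add_comm]
  refine Nat.add_le_add_left (card_le_card_of_injOn (fun t => (extend j ab.1 m, extend j ab.2 t))
    (fun t ht => ?_) (fun t₁ _ t₂ _ h => ?_)) 1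
  · have htW := mem_of_mem_erase ht
    have hmt : m < t := lt_of_le_of_ne (W.min'_le t htW) (ne_of_mem_erase ht).symm
    rw [mem_coe, mem_filter, mem_boxFinset]
    exact ⟨extend_mem_boxes hj hmt (mem_filter.mp hm).2 (mem_filter.mp htW).2, by simp⟩
  · simpa [extend_apply_self hj] using congrFun (congrArg Prod.snd h) ⟨j, mem_insert_self j I⟩

theorem sum_boxCount_fiber_le (hj : j ∉ I) :
    ∑ v ∈ A.image (· j), boxCount {x ∈ A | x j = v} I ≤
      boxCount A I + boxCount A (insert j I) := by
  classical
  set B := boxFinset A I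
  set C := boxFinset A (insert j I)
  have hfiber (v : ℤ) :
      boxFinset {x ∈ A | x j = v} I = {ab ∈ B | ab ∈ boxes {x ∈ A | x j = v} I} := by
    ext ab
    simp only [mem_filter, mem_boxFinset, B]
    exact ⟨fun h => ⟨boxes_mono (filter_subset _ _) h, h⟩, And.right⟩
  calc ∑ v ∈ A.image (· j), boxCount {x ∈ A | x j = v} I
      = ∑ ab ∈ B, #{v ∈ A.image (· j) | ab ∈ boxes {x ∈ A | x j = v} I} := by
        simp_rw [boxCount_eq_card, hfiber]
        exact sum_card_bipartiteAbove_eq_sum_card_bipartiteBelow _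
    _ ≤ ∑ ab ∈ B, (1 + #{p ∈ C | Prod.map (restrictInsert j I) (restrictInsert j I) p = ab}) :=
        sum_le_sum fun ab _ => card_filter_mem_boxes_le hj _ ab
    _ = #B + #{p ∈ C | Prod.map (restrictInsert j I) (restrictInsert j I) p ∈ B} := by
        rw [sum_add_distrib, sum_const, smul_eq_mul, mul_one, sum_card_fiberwise_eq_card_filter]
    _ ≤ boxCount A I + boxCount A (insert j I) := by
        rw [boxCount_eq_card, boxCount_eq_card]
        exact Nat.add_le_add_left (card_filter_le _ _) _

theorem card_le_sum_boxCount (A : Finset (Fin n → ℤ)) : #A ≤ ∑ I, boxCount A I := by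
  classical
  induction A using Finset.strongInduction with | H A ih => ?_
  by_cases hA : #A ≤ 1
  · rcases A.eq_empty_or_nonempty with rfl | hne
    · simp
    calc #A ≤ boxCount A ∅ := (boxCount_empty_eq_one hne).symm ▸ hA
      _ ≤ ∑ I, boxCount A I := single_le_sum (fun _ _ => Nat.zero_le _) (mem_univ _)
  obtain ⟨x, hx, y, hy, hxy⟩ := one_lt_card.mp (not_le.mp hA)
  obtain ⟨j, hj⟩ := Function.ne_iff.mp hxy
  have hfiber_ssubset (v : ℤ) : {z ∈ A | z j = v} ⊂ A := by
    refine filter_ssubset.mpr ?_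
    by_cases hv : x j = v
    · exact ⟨y, hy, fun h => hj (hv.trans h.symm)⟩
    · exact ⟨x, hx, hv⟩
  calc #A = ∑ v ∈ A.image (· j), #{z ∈ A | z j = v} := card_eq_sum_card_image _ _
    _ ≤ ∑ v ∈ A.image (· j), ∑ I, boxCount {z ∈ A | z j = v} I :=
        sum_le_sum fun v _ => ih _ (hfiber_ssubset v)
    _ = ∑ I, ∑ v ∈ A.image (· j), boxCount {z ∈ A | z j = v} I := sum_comm
    _ ≤ ∑ I ∈ (univ.erase j).powerset, (boxCount A I + boxCount A (insert j I)) := by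
        rw [sum_univ_finset_eq_sum_powerset_erase j]
        refine sum_le_sum fun I hI => ?_
        have hjI : j ∉ I := fun h => notMem_erase j univ (mem_powerset.mp hI h)
        simp only [boxCount_filter_eq_zero (mem_insert_self j I), sum_const_zero, add_zero]
        exact sum_boxCount_fiber_le hjI
    _ = ∑ I, boxCount A I := (sum_univ_finset_eq_sum_powerset_erase j _).symm

end BoxCount

/-- **Theorem 2.2.** For every finite `A ⊆ ℤ^n`,
`#A ≤ 1 + ∑_I #(integer boxes in P_I A)`, the sum over all nonempty `I`. -/
theorem card_le_one_add_sum_boxCount (n : ℕ) (A : Finset (Fin n → ℤ)) :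
    A.card ≤ 1 + ∑ I ∈ (Finset.univ : Finset (Finset (Fin n))).filter
      (fun I => I.Nonempty), boxCount A I := by
  calc A.card ≤ ∑ I, boxCount A I := BoxCount.card_le_sum_boxCount A
    _ = boxCount A ∅ + ∑ I with I.Nonempty, boxCount A I := by
        rw [← sum_filter_add_sum_filter_not univ Finset.Nonempty, add_comm]
        simp [not_nonempty_iff_eq_empty, filter_eq']
    _ ≤ 1 + ∑ I with I.Nonempty, boxCount A I :=
        Nat.add_le_add_right (BoxCount.boxCount_empty_le_one A) _
end

section
/- For every finite set A ⊆ ℤ^n, #A ≤ 1 + Σ_I #(integer cells contained in cconv(P_I A)), where the sum is over all nonempty subsets I ⊆ {1,...,n}. -/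
/-- The coordinate convex hull of a set `B ⊆ ℤ^I`: all `x` such that for every
sign pattern `θ` there is `y ∈ B` lying on the appropriate side of `x` in
each coordinate. -/
def cconvZ {ι : Type*} (B : Set (ι → ℤ)) : Set (ι → ℤ) :=
  {x | ∀ θ : ι → Bool, ∃ y ∈ B,
    ∀ i, (θ i = true → x i ≤ y i) ∧ (θ i = false → y i ≤ x i)}

/-- The number of integer cells `∏_{i∈I} {a i, a i + 1}` contained in the
coordinate convex hull of the projection of `A` onto the coordinates in `I`. -/
noncomputable def cellCountZ {n : ℕ} (A : Finset (Fin n → ℤ)) (I : Finset (Fin n)) : ℕ :=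
  Set.ncard {a : {i // i ∈ I} → ℤ |
    ∀ c : {i // i ∈ I} → ℤ, (∀ i, c i = a i ∨ c i = a i + 1) →
      c ∈ cconvZ {z : {i // i ∈ I} → ℤ | ∃ x ∈ A, ∀ i : {i // i ∈ I}, x i.1 = z i}}

/-!
Slice `A` by the value `t` of a coordinate `i₀ ∉ J`. A cell `a` of `cconv(P_J A_t)` is a cell of
`cconv(P_J A)`, and if `a` is also a cell for a lower slice `t' < t`, then the stacked cell
`a × {t - 1, t}` lies in `cconv(P_{J ∪ {i₀}} A)`: each orthant is witnessed in slice `t'` or `t`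
according to its sign at `i₀`. Keeping `(t, a)` as `a` at the lowest slice containing `a` and
stacking it at every other slice is injective, so `∑_t N(A_t, J) ≤ N(A, J) + N(A, J ∪ {i₀})`.
Counting the empty cell, `N(A, ∅) = 1` for nonempty `A`, and induction on the set `S` of
non-constant coordinates gives `#A ≤ ∑_{I ⊆ S} N(A, I)`.
-/

open Finset

variable {ι : Type*}

def coordProj (A : Finset (ι → ℤ)) (I : Finset ι) : Set ({i // i ∈ I} → ℤ) :=
  {z | ∃ x ∈ A, ∀ i : {i // i ∈ I}, x i.1 = z i}

/-- Lower corners of the integer cells contained in `cconvZ B`. -/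
def cellSet (B : Set (ι → ℤ)) : Set (ι → ℤ) :=
  {a | ∀ c : ι → ℤ, (∀ i, c i = a i ∨ c i = a i + 1) → c ∈ cconvZ B}

noncomputable def cellCount (A : Finset (ι → ℤ)) (I : Finset ι) : ℕ :=
  (cellSet (coordProj A I)).ncard

theorem coordProj_mono {A B : Finset (ι → ℤ)} (h : A ⊆ B) (I : Finset ι) :
    coordProj A I ⊆ coordProj B I :=
  fun _ ⟨x, hx, hz⟩ => ⟨x, h hx, hz⟩

theorem coordProj_finite (A : Finset (ι → ℤ)) (I : Finset ι) : (coordProj A I).Finite := by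
  refine (A.finite_toSet.image fun x (i : {i // i ∈ I}) => x i.1).subset ?_
  rintro z ⟨x, hx, hz⟩
  exact ⟨x, hx, funext hz⟩

theorem cconvZ_mono {B C : Set (ι → ℤ)} (h : B ⊆ C) : cconvZ B ⊆ cconvZ C := by
  intro x hx θ
  obtain ⟨y, hy, hxy⟩ := hx θ
  exact ⟨y, h hy, hxy⟩

theorem cconvZ_finite [Fintype ι] [DecidableEq ι] {B : Set (ι → ℤ)} (hB : B.Finite) :
    (cconvZ B).Finite := by
  obtain ⟨l, hl⟩ := hB.bddBelow
  obtain ⟨u, hu⟩ := hB.bddAbove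
  refine BddBelow.finite_of_bddAbove ⟨l, fun x hx => ?_⟩ ⟨u, fun x hx => ?_⟩
  · obtain ⟨y, hy, hxy⟩ := hx fun _ => false
    exact fun i => (hl hy i).trans ((hxy i).2 rfl)
  · obtain ⟨y, hy, hxy⟩ := hx fun _ => true
    exact fun i => ((hxy i).1 rfl).trans (hu hy i)

theorem cellSet_mono {B C : Set (ι → ℤ)} (h : B ⊆ C) : cellSet B ⊆ cellSet C :=
  fun _ ha c hc => cconvZ_mono h (ha c hc)

theorem cellSet_subset_cconvZ (B : Set (ι → ℤ)) : cellSet B ⊆ cconvZ B :=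
  fun a ha => ha a fun _ => Or.inl rfl

theorem cellSet_coordProj_finite (A : Finset (ι → ℤ)) (I : Finset ι) :
    (cellSet (coordProj A I)).Finite := by
  classical
  exact (cconvZ_finite (coordProj_finite A I)).subset (cellSet_subset_cconvZ _)

theorem cellSet_of_isEmpty [IsEmpty ι] {B : Set (ι → ℤ)} (hB : B.Nonempty) :
    cellSet B = Set.univ := by
  obtain ⟨y, hy⟩ := hB
  exact Set.eq_univ_of_forall fun _ _ _ _ => ⟨y, hy, isEmptyElim⟩

theorem cellCount_empty_le_one (A : Finset (ι → ℤ)) : cellCount A ∅ ≤ 1 :=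
  Set.ncard_le_one_of_subsingleton _

theorem cellCount_empty_of_nonempty {A : Finset (ι → ℤ)} (hA : A.Nonempty) :
    cellCount A ∅ = 1 := by
  obtain ⟨x, hx⟩ := hA
  have hproj : (coordProj A ∅).Nonempty := ⟨fun i => x i.1, x, hx, fun _ => rfl⟩
  rw [cellCount, cellSet_of_isEmpty hproj, Set.ncard_univ, Nat.card_unique]

theorem cellCount_eq_card (A : Finset (ι → ℤ)) (I : Finset ι) :
    cellCount A I = (cellSet_coordProj_finite A I).toFinset.card :=
  Set.ncard_eq_toFinset_card _ _

noncomputable def sliceCells (A : Finset (ι → ℤ)) (i₀ : ι) (J : Finset ι) :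
    ℤ → Finset ({j // j ∈ J} → ℤ) :=
  fun t => (cellSet_coordProj_finite (A.filter (· i₀ = t)) J).toFinset

theorem mem_sliceCells {A : Finset (ι → ℤ)} {i₀ : ι} {J : Finset ι} {t : ℤ}
    {a : {j // j ∈ J} → ℤ} :
    a ∈ sliceCells A i₀ J t ↔ a ∈ cellSet (coordProj (A.filter (· i₀ = t)) J) :=
  Set.Finite.mem_toFinset _

section

variable [DecidableEq ι] {i₀ : ι} {J : Finset ι}

def extendCoord (i₀ : ι) (J : Finset ι) (a : {j // j ∈ J} → ℤ) (s : ℤ) :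
    {j // j ∈ insert i₀ J} → ℤ :=
  fun j => if h : j.1 ∈ J then a ⟨j.1, h⟩ else s

theorem extendCoord_of_mem (a : {j // j ∈ J} → ℤ) (s : ℤ) (j : {j // j ∈ J}) :
    extendCoord i₀ J a s ⟨j.1, mem_insert_of_mem j.2⟩ = a j :=
  dif_pos j.2

theorem extendCoord_self (hi₀ : i₀ ∉ J) (a : {j // j ∈ J} → ℤ) (s : ℤ) :
    extendCoord i₀ J a s ⟨i₀, mem_insert_self i₀ J⟩ = s :=
  dif_neg hi₀

theorem extendCoord_inj (hi₀ : i₀ ∉ J) {a a' : {j // j ∈ J} → ℤ} {s s' : ℤ}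
    (h : extendCoord i₀ J a s = extendCoord i₀ J a' s') : a = a' ∧ s = s' := by
  refine ⟨funext fun j => ?_, ?_⟩
  · simpa only [extendCoord_of_mem] using congrFun h ⟨j.1, mem_insert_of_mem j.2⟩
  · simpa only [extendCoord_self hi₀] using congrFun h ⟨i₀, mem_insert_self i₀ J⟩

theorem extendCoord_mem_cellSet {A : Finset (ι → ℤ)} (hi₀ : i₀ ∉ J) {t₁ t₂ s : ℤ}
    (h₁ : t₁ ≤ s) (h₂ : s < t₂) {a : {j // j ∈ J} → ℤ}
    (ha₁ : a ∈ cellSet (coordProj (A.filter (· i₀ = t₁)) J))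
    (ha₂ : a ∈ cellSet (coordProj (A.filter (· i₀ = t₂)) J)) :
    extendCoord i₀ J a s ∈ cellSet (coordProj A (insert i₀ J)) := by
  intro c hc θ
  let up (j : {j // j ∈ J}) : {j // j ∈ insert i₀ J} := ⟨j.1, mem_insert_of_mem j.2⟩
  let i₀' : {j // j ∈ insert i₀ J} := ⟨i₀, mem_insert_self i₀ J⟩
  have hcJ (j : {j // j ∈ J}) : c (up j) = a j ∨ c (up j) = a j + 1 := by
    simpa only [up, extendCoord_of_mem] using hc (up j)
  have hci₀ : c i₀' = s ∨ c i₀' = s + 1 := by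
    simpa only [i₀', extendCoord_self hi₀] using hc i₀'
  have hslice : a ∈ cellSet (coordProj (A.filter (· i₀ = cond (θ i₀') t₂ t₁)) J) := by
    cases θ i₀' <;> assumption
  obtain ⟨z, ⟨x, hxA, hxz⟩, hz⟩ := hslice (c ∘ up) hcJ (θ ∘ up)
  rw [mem_filter] at hxA
  refine ⟨fun j => x j.1, ⟨x, hxA.1, fun _ => rfl⟩, fun i => ?_⟩
  by_cases hiJ : i.1 ∈ J
  · have hzi := hz ⟨i.1, hiJ⟩
    rw [← hxz ⟨i.1, hiJ⟩] at hzi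
    exact hzi
  · obtain rfl : i = i₀' := Subtype.ext ((mem_insert.1 i.2).resolve_right hiJ)
    show (θ i₀' = true → c i₀' ≤ x i₀) ∧ (θ i₀' = false → x i₀ ≤ c i₀')
    rw [hxA.2]
    constructor <;> intro hθ <;> simp only [hθ, cond_true, cond_false] <;> omega

open Classical in
noncomputable def keepOrStack (A : Finset (ι → ℤ)) (i₀ : ι) (J : Finset ι)
    (p : Σ _ : ℤ, ({j // j ∈ J} → ℤ)) : ({j // j ∈ J} → ℤ) ⊕ ({j // j ∈ insert i₀ J} → ℤ) :=
  if ∃ t' < p.1, p.2 ∈ sliceCells A i₀ J t' then .inr (extendCoord i₀ J p.2 (p.1 - 1))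
  else .inl p.2

theorem keepOrStack_mem {A : Finset (ι → ℤ)} (hi₀ : i₀ ∉ J) (T : Finset ℤ) :
    ∀ p ∈ T.sigma (sliceCells A i₀ J), keepOrStack A i₀ J p ∈
      (cellSet_coordProj_finite A J).toFinset.disjSum
        (cellSet_coordProj_finite A (insert i₀ J)).toFinset := by
  rintro ⟨t, a⟩ hp
  have ha := mem_sliceCells.1 (mem_sigma.1 hp).2
  by_cases hlow : ∃ t' < t, a ∈ sliceCells A i₀ J t'
  · obtain ⟨t', ht', ha'⟩ := hlow
    rw [keepOrStack, if_pos ⟨t', ht', ha'⟩, inr_mem_disjSum, Set.Finite.mem_toFinset]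
    exact extendCoord_mem_cellSet hi₀ (Int.le_sub_one_of_lt ht') (sub_one_lt t)
      (mem_sliceCells.1 ha') ha
  · rw [keepOrStack, if_neg hlow, inl_mem_disjSum, Set.Finite.mem_toFinset]
    exact cellSet_mono (coordProj_mono (filter_subset _ A) J) ha

theorem keepOrStack_injOn {A : Finset (ι → ℤ)} (hi₀ : i₀ ∉ J) (T : Finset ℤ) :
    Set.InjOn (keepOrStack A i₀ J) (T.sigma (sliceCells A i₀ J)) := by
  rintro ⟨t, a⟩ hp ⟨t', a'⟩ hp' heq
  have ha : a ∈ sliceCells A i₀ J t := (mem_sigma.1 hp).2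
  have ha' : a' ∈ sliceCells A i₀ J t' := (mem_sigma.1 hp').2
  by_cases hlow : ∃ t'' < t, a ∈ sliceCells A i₀ J t'' <;>
    by_cases hlow' : ∃ t'' < t', a' ∈ sliceCells A i₀ J t'' <;>
    simp only [keepOrStack, hlow, hlow', if_true, if_false, reduceCtorEq] at heq
  · obtain ⟨rfl, hs⟩ := extendCoord_inj hi₀ (Sum.inr_injective heq)
    obtain rfl : t = t' := by omega
    rfl
  · obtain rfl := Sum.inl_injective heq
    obtain rfl : t = t' := by
      by_contra hne
      rcases Ne.lt_or_gt hne with h | h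
      exacts [hlow' ⟨t, h, ha⟩, hlow ⟨t', h, ha'⟩]
    rfl

theorem sum_cellCount_filter_le (A : Finset (ι → ℤ)) (hi₀ : i₀ ∉ J) :
    ∑ t ∈ A.image (· i₀), cellCount (A.filter (· i₀ = t)) J
      ≤ cellCount A J + cellCount A (insert i₀ J) := by
  simp only [cellCount_eq_card]
  rw [← card_disjSum, ← card_sigma]
  exact card_le_card_of_injOn _ (keepOrStack_mem hi₀ _) (keepOrStack_injOn hi₀ _)

theorem card_le_sum_powerset_cellCount (S : Finset ι) (A : Finset (ι → ℤ))
    (hA : ∀ x ∈ A, ∀ y ∈ A, ∀ i ∉ S, x i = y i) :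
    #A ≤ ∑ I ∈ S.powerset, cellCount A I := by
  induction S using Finset.induction_on generalizing A with
  | empty =>
    rcases A.eq_empty_or_nonempty with rfl | hne
    · simp
    rw [powerset_empty, sum_singleton, cellCount_empty_of_nonempty hne]
    exact card_le_one.2 fun x hx y hy => funext fun i => hA x hx y hy i (notMem_empty i)
  | @insert i₀ s hi₀ ih =>
    have hslice (t : ℤ) : ∀ x ∈ A.filter (· i₀ = t), ∀ y ∈ A.filter (· i₀ = t), ∀ i ∉ s,
        x i = y i := by
      intro x hx y hy i hi
      rw [mem_filter] at hx hy
      by_cases h : i = i₀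
      · rw [h, hx.2, hy.2]
      · exact hA x hx.1 y hy.1 i (by simp [h, hi])
    calc #A = ∑ t ∈ A.image (· i₀), #(A.filter (· i₀ = t)) := card_eq_sum_card_image _ A
      _ ≤ ∑ t ∈ A.image (· i₀), ∑ J ∈ s.powerset, cellCount (A.filter (· i₀ = t)) J :=
          sum_le_sum fun t _ => ih _ (hslice t)
      _ = ∑ J ∈ s.powerset, ∑ t ∈ A.image (· i₀), cellCount (A.filter (· i₀ = t)) J :=
          sum_comm
      _ ≤ ∑ J ∈ s.powerset, (cellCount A J + cellCount A (insert i₀ J)) :=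
          sum_le_sum fun J hJ => sum_cellCount_filter_le A fun h => hi₀ (mem_powerset.1 hJ h)
      _ = ∑ I ∈ (insert i₀ s).powerset, cellCount A I := by
          rw [sum_add_distrib, sum_powerset_insert hi₀]

end

/-- **Theorem 2.4.** For every finite `A ⊆ ℤ^n`,
`#A ≤ 1 + ∑_I #(integer cells in cconv(P_I A))`, the sum over all nonempty `I`. -/
theorem card_le_one_add_sum_cellCount (n : ℕ) (A : Finset (Fin n → ℤ)) :
    A.card ≤ 1 + ∑ I ∈ (Finset.univ : Finset (Finset (Fin n))).filter
      (fun I => I.Nonempty), cellCountZ A I := by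
  change _ ≤ 1 + ∑ I ∈ _, cellCount A I
  have hnonempty : (univ : Finset (Finset (Fin n))).filter (·.Nonempty) = univ.erase ∅ := by
    simp only [nonempty_iff_ne_empty, filter_ne']
  have h := card_le_sum_powerset_cellCount univ A fun _ _ _ _ i hi => absurd (mem_univ i) hi
  rw [powerset_univ, ← add_sum_erase _ _ (mem_univ ∅)] at h
  rw [hnonempty]
  exact h.trans (Nat.add_le_add_right (cellCount_empty_le_one A) _)
end

section
/- Let A ⊆ Π_{i=1}^n {0,1,...,N_i} be a finite set of integer vectors with Vapnik–Chervonenkis/Pollard combinatorial dimension v(A) = d. Then #A ≤ Σ_{I : #I ≤ d} Π_{i∈I} N_i, where the sum runs over all subsets I ⊆ {1,...,n} of cardinality at most d, including I = ∅ contributing 1. -/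
/-- A coordinate set `I` is 1-shattered by `A ⊆ ℤ^n`: there is a level
function `h` such that for every partition of `I` into `S` and `I \ S` some
`x ∈ A` satisfies `x i ≥ h i + 1` on `S` and `x i ≤ h i` on `I \ S`. -/
def ShatteredZ {n : ℕ} (A : Finset (Fin n → ℤ)) (I : Finset (Fin n)) : Prop :=
  ∃ h : Fin n → ℤ, ∀ S ⊆ I, ∃ x ∈ A,
    (∀ i ∈ S, h i + 1 ≤ x i) ∧ (∀ i ∈ I \ S, x i ≤ h i)

open Finset

lemma mem_map_castSucc {n : ℕ} (J : Finset (Fin n)) (j : Fin n) :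
    j.castSucc ∈ J.map Fin.castSuccEmb ↔ j ∈ J := by
  rw [show j.castSucc = Fin.castSuccEmb j from rfl]
  exact Finset.mem_map' _

lemma last_notMem_map_castSucc' {n : ℕ} (J : Finset (Fin n)) :
    Fin.last n ∉ J.map Fin.castSuccEmb := by
  rw [Finset.mem_map]
  rintro ⟨j, _, hj⟩
  exact (Fin.castSucc_lt_last j).ne (by exact hj)

/-- projection dropping the last coordinate -/
def projHL {n : ℕ} (x : Fin (n+1) → ℤ) : Fin n → ℤ := fun j => x j.castSucc

lemma lastCases_cast {n : ℕ} (c : ℤ) (h : Fin n → ℤ) (j : Fin n) :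
    (Fin.lastCases c h : Fin (n+1) → ℤ) j.castSucc = h j := by
  simp

lemma shattered_proj {n : ℕ} (A : Finset (Fin (n+1) → ℤ)) (J : Finset (Fin n))
    (hsh : ShatteredZ (A.image projHL) J) :
    ShatteredZ A (J.map Fin.castSuccEmb) := by
  classical
  obtain ⟨h, hh⟩ := hsh
  refine ⟨Fin.lastCases 0 h, ?_⟩
  intro S hS
  set T : Finset (Fin n) := Finset.univ.filter (fun j => j.castSucc ∈ S) with hT
  have hTJ : T ⊆ J := by
    intro j hj
    rw [hT, Finset.mem_filter] at hj
    exact (mem_map_castSucc J j).mp (hS hj.2)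
  obtain ⟨y, hy, hy1, hy2⟩ := hh T hTJ
  obtain ⟨x, hx, rfl⟩ := Finset.mem_image.mp hy
  refine ⟨x, hx, ?_, ?_⟩
  · intro i hi
    obtain ⟨j, _, hje⟩ := Finset.mem_map.mp (hS hi)
    have hje' : j.castSucc = i := hje
    subst hje'
    have hjT : j ∈ T := by rw [hT, Finset.mem_filter]; exact ⟨Finset.mem_univ _, hi⟩
    have := hy1 j hjT
    rw [lastCases_cast]
    exact this
  · intro i hi
    rw [Finset.mem_sdiff] at hi
    obtain ⟨j, hjJ, hje⟩ := Finset.mem_map.mp hi.1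
    have hje' : j.castSucc = i := hje
    subst hje'
    have hjT : j ∉ T := by
      rw [hT, Finset.mem_filter]; rintro ⟨-, hc⟩; exact hi.2 hc
    have := hy2 j (Finset.mem_sdiff.mpr ⟨hjJ, hjT⟩)
    rw [lastCases_cast]
    exact this

lemma shattered_B {n : ℕ} (A : Finset (Fin (n+1) → ℤ)) (k : ℤ) (J : Finset (Fin n))
    (hsh : ShatteredZ (((A.filter (fun x => k ≤ x (Fin.last n))).image projHL)
      ∩ ((A.filter (fun x => x (Fin.last n) ≤ k-1)).image projHL)) J) :
    ShatteredZ A (insert (Fin.last n) (J.map Fin.castSuccEmb)) := by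
  classical
  obtain ⟨h, hh⟩ := hsh
  refine ⟨Fin.lastCases (k-1) h, ?_⟩
  intro S hS
  set T : Finset (Fin n) := Finset.univ.filter (fun j => j.castSucc ∈ S) with hT
  have hTJ : T ⊆ J := by
    intro j hj
    rw [hT, Finset.mem_filter] at hj
    rcases Finset.mem_insert.mp (hS hj.2) with hc | hc
    · exact absurd hc (Fin.castSucc_lt_last j).ne
    · exact (mem_map_castSucc J j).mp hc
  obtain ⟨y, hy, hy1, hy2⟩ := hh T hTJ
  rw [Finset.mem_inter] at hy
  by_cases hlast : Fin.last n ∈ S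
  · obtain ⟨x, hx, rfl⟩ := Finset.mem_image.mp hy.1
    rw [Finset.mem_filter] at hx
    refine ⟨x, hx.1, ?_, ?_⟩
    · intro i hi
      rcases eq_or_ne i (Fin.last n) with rfl | hne
      · simp only [Fin.lastCases_last]; omega
      · obtain ⟨j, rfl⟩ := Fin.exists_castSucc_eq.mpr hne
        have hjT : j ∈ T := by rw [hT, Finset.mem_filter]; exact ⟨Finset.mem_univ _, hi⟩
        rw [lastCases_cast]
        exact hy1 j hjT
    · intro i hi
      rw [Finset.mem_sdiff] at hi
      have hne : i ≠ Fin.last n := fun hc => hi.2 (hc ▸ hlast)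
      obtain ⟨j, rfl⟩ := Fin.exists_castSucc_eq.mpr hne
      have hjJ : j ∈ J := by
        rcases Finset.mem_insert.mp hi.1 with hc | hc
        · exact absurd hc (Fin.castSucc_lt_last j).ne
        · exact (mem_map_castSucc J j).mp hc
      have hjT : j ∉ T := by
        rw [hT, Finset.mem_filter]; rintro ⟨-, hc⟩; exact hi.2 hc
      rw [lastCases_cast]
      exact hy2 j (Finset.mem_sdiff.mpr ⟨hjJ, hjT⟩)
  · obtain ⟨x, hx, rfl⟩ := Finset.mem_image.mp hy.2
    rw [Finset.mem_filter] at hx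
    refine ⟨x, hx.1, ?_, ?_⟩
    · intro i hi
      have hne : i ≠ Fin.last n := fun hc => hlast (hc ▸ hi)
      obtain ⟨j, rfl⟩ := Fin.exists_castSucc_eq.mpr hne
      have hjT : j ∈ T := by rw [hT, Finset.mem_filter]; exact ⟨Finset.mem_univ _, hi⟩
      rw [lastCases_cast]
      exact hy1 j hjT
    · intro i hi
      rw [Finset.mem_sdiff] at hi
      rcases eq_or_ne i (Fin.last n) with rfl | hne
      · simp only [Fin.lastCases_last]; omega
      · obtain ⟨j, rfl⟩ := Fin.exists_castSucc_eq.mpr hne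
        have hjJ : j ∈ J := by
          rcases Finset.mem_insert.mp hi.1 with hc | hc
          · exact absurd hc (Fin.castSucc_lt_last j).ne
          · exact (mem_map_castSucc J j).mp hc
        have hjT : j ∉ T := by
          rw [hT, Finset.mem_filter]; rintro ⟨-, hc⟩; exact hi.2 hc
        rw [lastCases_cast]
        exact hy2 j (Finset.mem_sdiff.mpr ⟨hjJ, hjT⟩)


def PhiHL (n d : ℕ) (N : Fin n → ℕ) : ℕ :=
  ∑ I ∈ (Finset.univ : Finset (Finset (Fin n))).filter
      (fun I => I.card ≤ d), ∏ i ∈ I, N i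

lemma one_le_phiHL (n d : ℕ) (N : Fin n → ℕ) : 1 ≤ PhiHL n d N := by
  have h : (∅ : Finset (Fin n)) ∈ (Finset.univ : Finset (Finset (Fin n))).filter
      (fun I => I.card ≤ d) := by simp
  calc 1 = ∏ i ∈ (∅ : Finset (Fin n)), N i := by simp
    _ ≤ _ := Finset.single_le_sum (f := fun I => ∏ i ∈ I, N i)
        (fun _ _ => Nat.zero_le _) h

lemma preimage_map_castSucc {n : ℕ} (J : Finset (Fin n)) :
    (J.map Fin.castSuccEmb).preimage Fin.castSucc (Fin.castSucc_injective n).injOn = J := by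
  ext j
  rw [Finset.mem_preimage]
  exact Finset.mem_map' _

lemma map_preimage_castSucc {n : ℕ} (I : Finset (Fin (n+1))) (hI : Fin.last n ∉ I) :
    (I.preimage Fin.castSucc (Fin.castSucc_injective n).injOn).map Fin.castSuccEmb = I := by
  ext i
  rw [Finset.mem_map]
  constructor
  · rintro ⟨j, hj, rfl⟩; exact (Finset.mem_preimage).mp hj
  · intro hi
    obtain ⟨j, rfl⟩ := Fin.exists_castSucc_eq.mpr (fun h => hI (h ▸ hi))
    exact ⟨j, Finset.mem_preimage.mpr hi, rfl⟩

lemma last_notMem_map_castSucc {n : ℕ} (J : Finset (Fin n)) :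
    Fin.last n ∉ J.map Fin.castSuccEmb := by
  rw [Finset.mem_map]
  rintro ⟨j, _, hj⟩
  exact (Fin.castSucc_lt_last j).ne hj

lemma phiHL_part1 (n d : ℕ) (N : Fin (n+1) → ℕ) :
    ∑ I ∈ (Finset.univ : Finset (Finset (Fin (n+1)))).filter
        (fun I => I.card ≤ d ∧ Fin.last n ∉ I), ∏ i ∈ I, N i
      = PhiHL n d (N ∘ Fin.castSucc) := by
  classical
  unfold PhiHL
  rw [eq_comm]
  apply Finset.sum_nbij'
    (i := fun J => J.map Fin.castSuccEmb)
    (j := fun I => I.preimage Fin.castSucc (Fin.castSucc_injective n).injOn)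
  · intro J hJ
    simp only [mem_filter, mem_univ, true_and, Finset.card_map] at hJ ⊢
    exact ⟨hJ, last_notMem_map_castSucc J⟩
  · intro I hI
    simp only [mem_filter, mem_univ, true_and] at hI ⊢
    calc (I.preimage Fin.castSucc _).card ≤ I.card := by
          rw [Finset.card_preimage]; exact Finset.card_filter_le _ _
      _ ≤ d := hI.1
  · intro J _; exact preimage_map_castSucc J
  · intro I hI
    simp only [mem_filter, mem_univ, true_and] at hI
    exact map_preimage_castSucc I hI.2
  · intro J _
    rw [Finset.prod_map]
    rfl

lemma phiHL_part2 (n d : ℕ) (N : Fin (n+1) → ℕ) (hd : 1 ≤ d) :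
    ∑ I ∈ (Finset.univ : Finset (Finset (Fin (n+1)))).filter
        (fun I => I.card ≤ d ∧ Fin.last n ∈ I), ∏ i ∈ I, N i
      = N (Fin.last n) * PhiHL n (d-1) (N ∘ Fin.castSucc) := by
  classical
  unfold PhiHL
  rw [Finset.mul_sum, eq_comm]
  apply Finset.sum_nbij'
    (i := fun J => insert (Fin.last n) (J.map Fin.castSuccEmb))
    (j := fun I => (I.erase (Fin.last n)).preimage Fin.castSucc (Fin.castSucc_injective n).injOn)
  · intro J hJ
    simp only [mem_filter, mem_univ, true_and] at hJ ⊢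
    refine ⟨?_, Finset.mem_insert_self _ _⟩
    rw [Finset.card_insert_of_notMem (last_notMem_map_castSucc J), Finset.card_map]
    omega
  · intro I hI
    simp only [mem_filter, mem_univ, true_and] at hI ⊢
    have : ((I.erase (Fin.last n)).preimage Fin.castSucc
        (Fin.castSucc_injective n).injOn).card ≤ (I.erase (Fin.last n)).card := by
      rw [Finset.card_preimage]; exact Finset.card_filter_le _ _
    have h2 := Finset.card_erase_of_mem hI.2
    omega
  · intro J _
    rw [Finset.erase_insert (last_notMem_map_castSucc J)]
    exact preimage_map_castSucc J
  · intro I hI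
    simp only [mem_filter, mem_univ, true_and] at hI
    rw [map_preimage_castSucc _ (Finset.notMem_erase _ _)]
    exact Finset.insert_erase hI.2
  · intro J _
    rw [Finset.prod_insert (last_notMem_map_castSucc J), Finset.prod_map]
    rfl

lemma phiHL_succ (n d : ℕ) (N : Fin (n+1) → ℕ) (hd : 1 ≤ d) :
    PhiHL (n+1) d N
      = PhiHL n d (N ∘ Fin.castSucc) + N (Fin.last n) * PhiHL n (d-1) (N ∘ Fin.castSucc) := by
  classical
  rw [← phiHL_part1 n d N, ← phiHL_part2 n d N hd]
  unfold PhiHL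
  have h := Finset.sum_filter_add_sum_filter_not
    ((Finset.univ : Finset (Finset (Fin (n+1)))).filter (fun I => I.card ≤ d))
    (fun I => Fin.last n ∈ I) (fun I => ∏ i ∈ I, N i)
  rw [Finset.filter_filter, Finset.filter_filter] at h
  rw [← h, add_comm]


lemma cardHL_le_one_of_dim_zero {n : ℕ} (A : Finset (Fin n → ℤ))
    (hdim : ∀ I : Finset (Fin n), ShatteredZ A I → I.card ≤ 0) : A.card ≤ 1 := by
  classical
  rw [Finset.card_le_one]
  intro a ha b hb
  by_contra hab
  obtain ⟨i, hi⟩ := Function.ne_iff.mp hab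
  have hsh : ShatteredZ A {i} := by
    refine ⟨fun j => min (a j) (b j), fun S hS => ?_⟩
    rcases Finset.subset_singleton_iff.mp hS with rfl | rfl
    · rcases le_total (a i) (b i) with hle | hle
      · refine ⟨a, ha, fun j hj => absurd hj (Finset.notMem_empty j), fun j hj => ?_⟩
        rw [Finset.sdiff_empty, Finset.mem_singleton] at hj
        subst hj
        show a j ≤ min (a j) (b j)
        exact le_min le_rfl hle
      · refine ⟨b, hb, fun j hj => absurd hj (Finset.notMem_empty j), fun j hj => ?_⟩
        rw [Finset.sdiff_empty, Finset.mem_singleton] at hj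
        subst hj
        show b j ≤ min (a j) (b j)
        exact le_min hle le_rfl
    · rcases le_total (a i) (b i) with hle | hle
      · have hlt : a i < b i := lt_of_le_of_ne hle hi
        refine ⟨b, hb, fun j hj => ?_, fun j hj => absurd hj (by simp)⟩
        rw [Finset.mem_singleton] at hj
        subst hj
        show min (a j) (b j) + 1 ≤ b j
        rw [min_eq_left hle]
        omega
      · have hlt : b i < a i := lt_of_le_of_ne hle (Ne.symm hi)
        refine ⟨a, ha, fun j hj => ?_, fun j hj => absurd hj (by simp)⟩
        rw [Finset.mem_singleton] at hj
        subst hj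
        show min (a j) (b j) + 1 ≤ a j
        rw [min_eq_right hle]
        omega
  have := hdim {i} hsh
  simp at this

lemma cardHL_le_phiHL : ∀ (n : ℕ), ∀ (d : ℕ) (N : Fin n → ℕ) (A : Finset (Fin n → ℤ)),
    (∀ x ∈ A, ∀ i, 0 ≤ x i ∧ x i ≤ (N i : ℤ)) →
    (∀ I : Finset (Fin n), ShatteredZ A I → I.card ≤ d) →
    A.card ≤ PhiHL n d N := by
  intro n
  induction n with
  | zero =>
    intro d N A _ _
    have : A.card ≤ 1 := Finset.card_le_one.mpr
      (fun a _ b _ => funext fun i => i.elim0)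
    exact this.trans (one_le_phiHL 0 d N)
  | succ n ih =>
    intro d N A hbd hdim
    rcases Nat.eq_zero_or_pos d with rfl | hd
    · exact (cardHL_le_one_of_dim_zero A hdim).trans (one_le_phiHL _ _ _)
    classical
    set Nl : ℕ := N (Fin.last n) with hNl
    set N' : Fin n → ℕ := N ∘ Fin.castSucc with hN'
    set A' : Finset (Fin n → ℤ) := A.image projHL with hA'
    set B : ℤ → Finset (Fin n → ℤ) := fun k =>
      ((A.filter (fun x => k ≤ x (Fin.last n))).image projHL)
        ∩ ((A.filter (fun x => x (Fin.last n) ≤ k-1)).image projHL) with hB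
    have hBsub : ∀ k, B k ⊆ A' := by
      intro k
      refine (Finset.inter_subset_left).trans ?_
      exact Finset.image_subset_image (Finset.filter_subset _ _)
    -- step 1 : counting
    have hfib : A.card = ∑ y ∈ A', (A.filter (fun x => projHL x = y)).card :=
      Finset.card_eq_sum_card_fiberwise (fun x hx => Finset.mem_image_of_mem _ hx)
    have hkey : ∀ y ∈ A', (A.filter (fun x => projHL x = y)).card
        ≤ 1 + ((Finset.Icc (1:ℤ) (Nl:ℤ)).filter (fun k => y ∈ B k)).card := by
      intro y hy
      set F := A.filter (fun x => projHL x = y) with hF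
      have hFne : F.Nonempty := by
        obtain ⟨x, hx, hxy⟩ := Finset.mem_image.mp hy
        exact ⟨x, Finset.mem_filter.mpr ⟨hx, hxy⟩⟩
      set V := F.image (fun x => x (Fin.last n)) with hV
      have hVcard : V.card = F.card := by
        apply Finset.card_image_of_injOn
        intro x hx x' hx' hxx
        simp only [Finset.mem_coe, hF, Finset.mem_filter] at hx hx'
        funext i
        refine Fin.lastCases hxx (fun j => ?_) i
        have : projHL x j = projHL x' j := by rw [hx.2, hx'.2]
        exact this
      have hVne : V.Nonempty := hFne.image _
      set a := V.min' hVne with ha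
      set b := V.max' hVne with hb2
      have hab : a ≤ b := V.min'_le _ (V.max'_mem hVne)
      obtain ⟨xa, hxa, hxae⟩ := Finset.mem_image.mp (V.min'_mem hVne)
      obtain ⟨xb, hxb, hxbe⟩ := Finset.mem_image.mp (V.max'_mem hVne)
      rw [hF, Finset.mem_filter] at hxa hxb
      have ha0 : 0 ≤ a := by rw [ha, ← hxae]; exact (hbd xa hxa.1 (Fin.last n)).1
      have hbN : b ≤ (Nl:ℤ) := by rw [hb2, ← hxbe]; exact (hbd xb hxb.1 (Fin.last n)).2
      have hVIcc : V ⊆ Finset.Icc a b := by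
        intro v hv
        exact Finset.mem_Icc.mpr ⟨V.min'_le v hv, V.le_max' v hv⟩
      have hVle : V.card ≤ (b - a).toNat + 1 := by
        calc V.card ≤ (Finset.Icc a b).card := Finset.card_le_card hVIcc
          _ = (b + 1 - a).toNat := Int.card_Icc a b
          _ = (b - a).toNat + 1 := by omega
      have hIoc : Finset.Ioc a b ⊆
          (Finset.Icc (1:ℤ) (Nl:ℤ)).filter (fun k => y ∈ B k) := by
        intro k hk
        rw [Finset.mem_Ioc] at hk
        rw [Finset.mem_filter, Finset.mem_Icc]
        refine ⟨⟨by omega, by omega⟩, ?_⟩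
        rw [hB, Finset.mem_inter]
        constructor
        · exact Finset.mem_image.mpr ⟨xb, Finset.mem_filter.mpr
            ⟨hxb.1, by rw [hxbe, ← hb2]; omega⟩, hxb.2⟩
        · exact Finset.mem_image.mpr ⟨xa, Finset.mem_filter.mpr
            ⟨hxa.1, by rw [hxae, ← ha]; omega⟩, hxa.2⟩
      calc F.card = V.card := hVcard.symm
        _ ≤ (b - a).toNat + 1 := hVle
        _ = (Finset.Ioc a b).card + 1 := by rw [Int.card_Ioc]
        _ ≤ ((Finset.Icc (1:ℤ) (Nl:ℤ)).filter (fun k => y ∈ B k)).card + 1 :=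
              Nat.add_le_add_right (Finset.card_le_card hIoc) 1
        _ = 1 + _ := by omega
    have hcount : A.card ≤ A'.card + ∑ k ∈ Finset.Icc (1:ℤ) (Nl:ℤ), (B k).card := by
      calc A.card = ∑ y ∈ A', (A.filter (fun x => projHL x = y)).card := hfib
        _ ≤ ∑ y ∈ A', (1 + ((Finset.Icc (1:ℤ) (Nl:ℤ)).filter (fun k => y ∈ B k)).card) :=
            Finset.sum_le_sum hkey
        _ = A'.card + ∑ y ∈ A',
              ((Finset.Icc (1:ℤ) (Nl:ℤ)).filter (fun k => y ∈ B k)).card := by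
            rw [Finset.sum_add_distrib, Finset.sum_const, smul_eq_mul, mul_one]
        _ = A'.card + ∑ k ∈ Finset.Icc (1:ℤ) (Nl:ℤ), (B k).card := by
            congr 1
            calc ∑ y ∈ A', ((Finset.Icc (1:ℤ) (Nl:ℤ)).filter (fun k => y ∈ B k)).card
                = ∑ y ∈ A', ∑ k ∈ Finset.Icc (1:ℤ) (Nl:ℤ), if y ∈ B k then 1 else 0 := by
                  apply Finset.sum_congr rfl
                  intro y _
                  exact Finset.card_filter _ _
              _ = ∑ k ∈ Finset.Icc (1:ℤ) (Nl:ℤ), ∑ y ∈ A', if y ∈ B k then 1 else 0 :=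
                  Finset.sum_comm
              _ = ∑ k ∈ Finset.Icc (1:ℤ) (Nl:ℤ), (B k).card := by
                  apply Finset.sum_congr rfl
                  intro k _
                  rw [← Finset.card_filter, Finset.filter_mem_eq_inter,
                    Finset.inter_eq_right.mpr (hBsub k)]
    -- step 2 : apply induction hypothesis
    have hbd' : ∀ y ∈ A', ∀ j, 0 ≤ y j ∧ y j ≤ ((N' j : ℕ) : ℤ) := by
      intro y hy j
      obtain ⟨x, hx, rfl⟩ := Finset.mem_image.mp hy
      exact hbd x hx j.castSucc
    have hA'le : A'.card ≤ PhiHL n d N' := by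
      apply ih d N' A' hbd'
      intro I hI
      have := hdim (I.map Fin.castSuccEmb) (shattered_proj A I hI)
      rwa [Finset.card_map] at this
    have hBle : ∀ k ∈ Finset.Icc (1:ℤ) (Nl:ℤ), (B k).card ≤ PhiHL n (d-1) N' := by
      intro k _
      apply ih (d-1) N' (B k) (fun y hy j => hbd' y (hBsub k hy) j)
      intro I hI
      have hsh := shattered_B A k I hI
      have := hdim _ hsh
      rw [Finset.card_insert_of_notMem (last_notMem_map_castSucc' I),
        Finset.card_map] at this
      omega
    calc A.card ≤ A'.card + ∑ k ∈ Finset.Icc (1:ℤ) (Nl:ℤ), (B k).card := hcount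
      _ ≤ PhiHL n d N' + ∑ k ∈ Finset.Icc (1:ℤ) (Nl:ℤ), PhiHL n (d-1) N' :=
          Nat.add_le_add hA'le (Finset.sum_le_sum hBle)
      _ = PhiHL n d N' + Nl * PhiHL n (d-1) N' := by
          rw [Finset.sum_const, Int.card_Icc, smul_eq_mul]
          congr 2
          omega
      _ = PhiHL (n+1) d N := (phiHL_succ n d N hd).symm


/-- **Haussler–Long (Corollary 2.6(i)).** If `A ⊆ ∏_{i} {0,…,N i}` has
combinatorial (Pollard) dimension at most `d`, then
`#A ≤ ∑_{#I ≤ d} ∏_{i ∈ I} N i` (the empty `I` contributing `1`). -/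
theorem haussler_long_pollard (n d : ℕ) (N : Fin n → ℕ)
    (A : Finset (Fin n → ℤ))
    (hbd : ∀ x ∈ A, ∀ i, 0 ≤ x i ∧ x i ≤ (N i : ℤ))
    (hdim : ∀ I : Finset (Fin n), ShatteredZ A I → I.card ≤ d) :
    A.card ≤ ∑ I ∈ (Finset.univ : Finset (Finset (Fin n))).filter
      (fun I => I.card ≤ d), ∏ i ∈ I, N i := by
  exact cardHL_le_phiHL n d N A hbd hdim
end

section
/- Let A ⊆ {0,1,...,N}^n be finite with combinatorial dimension v(A) = d. Then #A ≤ Σ_{i=0}^{d} C(n,i) N^i. -/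
open Finset Function

section Patterns

variable {ι : Type*} [Fintype ι] {N : ℕ}

def patternSupport (g : ι → Fin (N + 1)) : Finset ι := {i | g i ≠ 0}

@[simp]
lemma mem_patternSupport {g : ι → Fin (N + 1)} {i : ι} : i ∈ patternSupport g ↔ g i ≠ 0 := by
  simp [patternSupport]

lemma patternSupport_update [DecidableEq ι] {g : ι → Fin (N + 1)} {i : ι} {c : Fin (N + 1)}
    (hc : c ≠ 0) :
    patternSupport (update g i c) = insert i (patternSupport g) := by
  ext j
  rcases eq_or_ne j i with rfl | hj <;> simp [update_of_ne, *]

lemma card_filter_patternSupport_eq [DecidableEq ι] (I : Finset ι) :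
    #{g : ι → Fin (N + 1) | patternSupport g = I} = N ^ #I := by
  have hpi : ({g | patternSupport g = I} : Finset (ι → Fin (N + 1))) =
      Fintype.piFinset fun j => if j ∈ I then ({v | v ≠ 0} : Finset (Fin (N + 1))) else {0} := by
    ext g
    simp only [mem_filter_univ, Fintype.mem_piFinset, Finset.ext_iff, mem_patternSupport]
    refine forall_congr' fun j => ?_
    by_cases hj : j ∈ I <;> simp [hj]
  simp [hpi, apply_ite, filter_ne']

lemma card_filter_card_patternSupport_eq [DecidableEq ι] (k : ℕ) :
    #{g : ι → Fin (N + 1) | #(patternSupport g) = k} = (Fintype.card ι).choose k * N ^ k := by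
  rw [card_eq_sum_card_fiberwise (f := patternSupport) (t := powersetCard k univ)
    fun g hg => mem_powersetCard_univ.2 (mem_filter.1 hg).2]
  calc _ = ∑ I ∈ powersetCard k (univ : Finset ι), N ^ k := sum_congr rfl fun I hI => by
        rw [← (mem_powersetCard_univ.1 hI), ← card_filter_patternSupport_eq]
        congr 1; ext g; simp +contextual [iff_def]
    _ = _ := by simp [card_powersetCard]

lemma card_filter_card_patternSupport_le [DecidableEq ι] (d : ℕ) :
    #{g : ι → Fin (N + 1) | #(patternSupport g) ≤ d} =
      ∑ k ∈ range (d + 1), (Fintype.card ι).choose k * N ^ k := by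
  rw [card_eq_sum_card_fiberwise (f := fun g => #(patternSupport g)) (t := range (d + 1))
    fun g hg => mem_range_succ_iff.2 (mem_filter.1 hg).2]
  refine sum_congr rfl fun k hk => ?_
  rw [← card_filter_card_patternSupport_eq]
  congr 1; ext g; simp +contextual [iff_def, mem_range_succ_iff.1 hk]

/-- The pattern `g` stands for the coordinate set `patternSupport g` with the thresholds
`g i ∈ {1, …, N}` on it; the value `0` marks a coordinate outside the set. -/
def StronglyShatters [DecidableEq ι] (A : Finset (ι → ℤ)) (g : ι → Fin (N + 1)) : Prop :=
  ∀ S ⊆ patternSupport g, ∃ x ∈ A,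
    (∀ i ∈ S, ((g i : ℕ) : ℤ) ≤ x i) ∧ (∀ i ∈ patternSupport g \ S, x i < ((g i : ℕ) : ℤ))

variable [DecidableEq ι] {A B : Finset (ι → ℤ)} {g : ι → Fin (N + 1)} {i : ι}

lemma StronglyShatters.mono (h : StronglyShatters A g) (hAB : A ⊆ B) : StronglyShatters B g :=
  fun S hS => (h S hS).imp fun _ ⟨hx, hS⟩ => ⟨hAB hx, hS⟩

lemma StronglyShatters.exists_le (h : StronglyShatters A g) (hi : i ∈ patternSupport g) :
    ∃ x ∈ A, ((g i : ℕ) : ℤ) ≤ x i :=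
  (h {i} (singleton_subset_iff.2 hi)).imp fun _ ⟨hx, hle, _⟩ => ⟨hx, hle i (mem_singleton_self i)⟩

lemma StronglyShatters.exists_lt (h : StronglyShatters A g) (hi : i ∈ patternSupport g) :
    ∃ x ∈ A, x i < ((g i : ℕ) : ℤ) :=
  (h ∅ (empty_subset _)).imp fun _ ⟨hx, _, hlt⟩ => ⟨hx, hlt i (by simpa using hi)⟩

lemma stronglyShatters_zero (hA : A.Nonempty) : StronglyShatters A (0 : ι → Fin (N + 1)) := by
  intro S hS
  obtain ⟨x, hx⟩ := hA
  have hS : S = ∅ := subset_empty.1 (by simpa [patternSupport] using hS)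
  exact ⟨x, hx, by simp [hS], by simp [patternSupport]⟩

section Split

variable (c : Fin (N + 1))

lemma apply_eq_zero_of_stronglyShatters_filter
    (h₁ : StronglyShatters {x ∈ A | x i < ((c : ℕ) : ℤ)} g)
    (h₂ : StronglyShatters {x ∈ A | ((c : ℕ) : ℤ) ≤ x i} g) : g i = 0 := by
  by_contra hgi
  have hi : i ∈ patternSupport g := mem_patternSupport.2 hgi
  obtain ⟨x, hx, hgx⟩ := h₁.exists_le hi
  obtain ⟨y, hy, hyg⟩ := h₂.exists_lt hi
  have := (mem_filter.1 hx).2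
  have := (mem_filter.1 hy).2
  omega

variable {c}

lemma not_stronglyShatters_filter_lt (hc : c ≠ 0) (hg : g i = c) :
    ¬ StronglyShatters {x ∈ A | x i < ((c : ℕ) : ℤ)} g := fun h => by
  obtain ⟨x, hx, hcx⟩ := h.exists_le (mem_patternSupport.2 (hg ▸ hc))
  have := (mem_filter.1 hx).2
  rw [hg] at hcx
  omega

lemma not_stronglyShatters_filter_le (hc : c ≠ 0) (hg : g i = c) :
    ¬ StronglyShatters {x ∈ A | ((c : ℕ) : ℤ) ≤ x i} g := fun h => by
  obtain ⟨x, hx, hxc⟩ := h.exists_lt (mem_patternSupport.2 (hg ▸ hc))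
  have := (mem_filter.1 hx).2
  rw [hg] at hxc
  omega

lemma stronglyShatters_update (hc : c ≠ 0)
    (h₁ : StronglyShatters {x ∈ A | x i < ((c : ℕ) : ℤ)} g)
    (h₂ : StronglyShatters {x ∈ A | ((c : ℕ) : ℤ) ≤ x i} g) :
    StronglyShatters A (update g i c) := by
  have hi : i ∉ patternSupport g := by
    simpa using apply_eq_zero_of_stronglyShatters_filter c h₁ h₂
  intro S hS
  rw [patternSupport_update hc] at hS ⊢
  have hT : S.erase i ⊆ patternSupport g := fun j hj => by
    have := hS (mem_of_mem_erase hj)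
    simp_all
  obtain ⟨x, hx, hxi, hxT, hxT'⟩ : ∃ x ∈ A, (i ∈ S ↔ ((c : ℕ) : ℤ) ≤ x i) ∧
      (∀ j ∈ S.erase i, ((g j : ℕ) : ℤ) ≤ x j) ∧
      (∀ j ∈ patternSupport g \ S.erase i, x j < ((g j : ℕ) : ℤ)) := by
    by_cases hiS : i ∈ S
    · obtain ⟨x, hx, h⟩ := h₂ _ hT
      exact ⟨x, (mem_filter.1 hx).1, iff_of_true hiS (mem_filter.1 hx).2, h⟩
    · obtain ⟨x, hx, h⟩ := h₁ _ hT
      exact ⟨x, (mem_filter.1 hx).1, iff_of_false hiS (mem_filter.1 hx).2.not_ge, h⟩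
  refine ⟨x, hx, fun j hj => ?_, fun j hj => ?_⟩ <;> rcases eq_or_ne j i with rfl | hji
  · simpa using hxi.1 hj
  · simpa [hji] using hxT j (mem_erase.2 ⟨hji, hj⟩)
  · simpa using hxi.not.1 (mem_sdiff.1 hj).2
  · simpa [hji] using hxT' j (by simp_all)

end Split

open Classical in
noncomputable def stronglyShatteredPatterns (N : ℕ) (A : Finset (ι → ℤ)) :
    Finset (ι → Fin (N + 1)) :=
  {g | StronglyShatters A g}

@[simp]
lemma mem_stronglyShatteredPatterns :
    g ∈ stronglyShatteredPatterns N A ↔ StronglyShatters A g := by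
  simp [stronglyShatteredPatterns]

lemma card_stronglyShatteredPatterns_filter_add_le {c : Fin (N + 1)} (hc : c ≠ 0) :
    #(stronglyShatteredPatterns N {x ∈ A | x i < ((c : ℕ) : ℤ)}) +
      #(stronglyShatteredPatterns N {x ∈ A | ((c : ℕ) : ℤ) ≤ x i}) ≤
      #(stronglyShatteredPatterns N A) := by
  set P₁ := stronglyShatteredPatterns N {x ∈ A | x i < ((c : ℕ) : ℤ)}
  set P₂ := stronglyShatteredPatterns N {x ∈ A | ((c : ℕ) : ℤ) ≤ x i}
  have hzero : ∀ g ∈ P₁ ∩ P₂, g i = 0 := fun g hg => by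
    simp only [mem_inter, mem_stronglyShatteredPatterns, P₁, P₂] at hg
    exact apply_eq_zero_of_stronglyShatters_filter c hg.1 hg.2
  have hinj : Set.InjOn (fun g : ι → Fin (N + 1) => update g i c) ↑(P₁ ∩ P₂) :=
      fun g hg g' hg' h => by
    have := congrArg (update · i (0 : Fin (N + 1))) h
    simp only [update_idem] at this
    rwa [update_eq_self_iff.2 (hzero g hg).symm, update_eq_self_iff.2 (hzero g' hg').symm] at this
  have hdisj : Disjoint (P₁ ∪ P₂) ((P₁ ∩ P₂).image (update · i c)) := by
    simp only [disjoint_right, mem_image, mem_union, mem_stronglyShatteredPatterns, P₁, P₂]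
    rintro _ ⟨g, -, rfl⟩ (h | h)
    · exact not_stronglyShatters_filter_lt hc (update_self i c g) h
    · exact not_stronglyShatters_filter_le hc (update_self i c g) h
  have hsub : P₁ ∪ P₂ ∪ (P₁ ∩ P₂).image (update · i c) ⊆ stronglyShatteredPatterns N A := by
    refine union_subset (union_subset ?_ ?_) ?_ <;>
      simp only [subset_iff, mem_image, mem_inter, mem_stronglyShatteredPatterns, P₁, P₂]
    · exact fun g h => h.mono (filter_subset _ _)
    · exact fun g h => h.mono (filter_subset _ _)
    · rintro _ ⟨g, ⟨h₁, h₂⟩, rfl⟩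
      exact stronglyShatters_update hc h₁ h₂
  calc #P₁ + #P₂ = #(P₁ ∪ P₂) + #(P₁ ∩ P₂) := (card_union_add_card_inter P₁ P₂).symm
    _ = #(P₁ ∪ P₂ ∪ (P₁ ∩ P₂).image (update · i c)) := by
      rw [card_union_of_disjoint hdisj, card_image_of_injOn hinj]
    _ ≤ _ := card_le_card hsub

lemma card_le_card_stronglyShatteredPatterns (A : Finset (ι → ℤ))
    (hA : ∀ x ∈ A, ∀ i, 0 ≤ x i ∧ x i ≤ N) : #A ≤ #(stronglyShatteredPatterns N A) := by
  induction A using Finset.strongInduction with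
  | H A ih =>
  by_cases hsplit : ∃ u ∈ A, ∃ v ∈ A, ∃ i, u i < v i
  · obtain ⟨u, hu, v, hv, i, huv⟩ := hsplit
    have hu0 := (hA u hu i).1
    have hvN := (hA v hv i).2
    let c : Fin (N + 1) := ⟨(v i).toNat, by omega⟩
    have hc : ((c : ℕ) : ℤ) = v i := Int.toNat_of_nonneg (by omega)
    have hc0 : c ≠ 0 := fun h => by simp [Fin.ext_iff, c] at h; omega
    have hA_sub {B : Finset (ι → ℤ)} (hB : B ⊆ A) : ∀ x ∈ B, ∀ i, 0 ≤ x i ∧ x i ≤ N :=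
      fun x hx => hA x (hB hx)
    calc #A = #{x ∈ A | x i < ((c : ℕ) : ℤ)} + #{x ∈ A | ((c : ℕ) : ℤ) ≤ x i} := by
          simp_rw [← not_lt, card_filter_add_card_filter_not]
      _ ≤ #(stronglyShatteredPatterns N {x ∈ A | x i < ((c : ℕ) : ℤ)}) +
          #(stronglyShatteredPatterns N {x ∈ A | ((c : ℕ) : ℤ) ≤ x i}) :=
        add_le_add (ih _ (filter_ssubset.2 ⟨v, hv, by omega⟩) (hA_sub (filter_subset _ _)))
          (ih _ (filter_ssubset.2 ⟨u, hu, by omega⟩) (hA_sub (filter_subset _ _)))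
      _ ≤ #(stronglyShatteredPatterns N A) := card_stronglyShatteredPatterns_filter_add_le hc0
  · push Not at hsplit
    obtain rfl | hne := A.eq_empty_or_nonempty
    · simp
    calc #A ≤ 1 := card_le_one.2 fun x hx y hy =>
          funext fun i => le_antisymm (hsplit y hy x hx i) (hsplit x hx y hy i)
      _ ≤ #(stronglyShatteredPatterns N A) :=
        card_pos.2 ⟨0, mem_stronglyShatteredPatterns.2 (stronglyShatters_zero hne)⟩

end Patterns

lemma StronglyShatters.shatteredZ {n N : ℕ} {A : Finset (Fin n → ℤ)} {g : Fin n → Fin (N + 1)}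
    (h : StronglyShatters A g) : ShatteredZ A (patternSupport g) :=
  ⟨fun j => ((g j : ℕ) : ℤ) - 1, fun S hS => (h S hS).imp fun _ ⟨hx, hle, hlt⟩ =>
    ⟨hx, fun i hi => by linarith [hle i hi], fun i hi => by linarith [hlt i hi]⟩⟩

/-- **Haussler–Long (Corollary 2.6(ii)).** If `A ⊆ {0,…,N}^n` has
combinatorial dimension at most `d`, then `#A ≤ ∑_{i=0}^d C(n,i) N^i`. -/
theorem haussler_long_uniform (n d N : ℕ) (A : Finset (Fin n → ℤ))
    (hbd : ∀ x ∈ A, ∀ i, 0 ≤ x i ∧ x i ≤ (N : ℤ))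
    (hdim : ∀ I : Finset (Fin n), ShatteredZ A I → I.card ≤ d) :
    A.card ≤ ∑ i ∈ Finset.range (d + 1), n.choose i * N ^ i := by
  calc #A ≤ #(stronglyShatteredPatterns N A) := card_le_card_stronglyShatteredPatterns A hbd
    _ ≤ #{g | #(patternSupport g) ≤ d} := card_le_card fun g hg =>
      (mem_filter_univ g).2 (hdim _ (mem_stronglyShatteredPatterns.1 hg).shatteredZ)
    _ = ∑ i ∈ range (d + 1), n.choose i * N ^ i := by
      rw [card_filter_card_patternSupport_le, Fintype.card_fin]
end

section
/- Let A ⊆ Π_{i=1}^n {0,1,...,N_i} have Natarajan dimension n(A) = d. Then #A ≤ Σ_{I : #I ≤ d} Π_{i∈I} C(N_i + 1, 2), where the sum is over all subsets I of cardinality at most d, with I = ∅ contributing 1. -/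
/-- The projection of `A` onto the coordinates in `I` contains an integer box
`∏_{i∈I} {a i, b i}` with `a i ≠ b i` for all `i ∈ I`. -/
def ContainsBox {n : ℕ} (A : Finset (Fin n → ℤ)) (I : Finset (Fin n)) : Prop :=
  ∃ a b : {i // i ∈ I} → ℤ, (∀ i, a i ≠ b i) ∧
    ∀ c : {i // i ∈ I} → ℤ, (∀ i, c i = a i ∨ c i = b i) →
      ∃ x ∈ A, ∀ i : {i // i ∈ I}, x i.1 = c i

lemma card_lt_pairs {α : Type*} [LinearOrder α] [DecidableEq α] (s : Finset α) :
    ((s ×ˢ s).filter fun p => p.1 < p.2).card = s.card.choose 2 := by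
  rw [← Finset.card_powersetCard]
  apply Finset.card_bij (fun p _ => ({p.1, p.2} : Finset α))
  · rintro ⟨a, b⟩ hp
    simp only [Finset.mem_filter, Finset.mem_product] at hp
    rw [Finset.mem_powersetCard]
    exact ⟨by intro x hx; simp at hx; rcases hx with h|h <;> simp [h, hp.1.1, hp.1.2],
      Finset.card_pair hp.2.ne⟩
  · rintro ⟨a, b⟩ hp ⟨c, d⟩ hq h
    simp only [Finset.mem_filter, Finset.mem_product] at hp hq
    have h1 : a ∈ ({c, d} : Finset α) := by rw [← h]; simp
    have h2 : b ∈ ({c, d} : Finset α) := by rw [← h]; simp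
    simp only [Finset.mem_insert, Finset.mem_singleton] at h1 h2
    have hab : a < b := hp.2
    have hcd : c < d := hq.2
    rcases h1 with rfl|rfl <;> rcases h2 with rfl|rfl <;>
      first
        | rfl
        | exact absurd hab (lt_irrefl _)
        | exact absurd hab (not_lt.2 hcd.le)
  · intro t ht
    rw [Finset.mem_powersetCard] at ht
    obtain ⟨a, b, hab, rfl⟩ := Finset.card_eq_two.mp ht.2
    rcases lt_or_gt_of_ne hab with h|h
    · exact ⟨(a, b), by simp [Finset.mem_filter, Finset.mem_product,
        ht.1 (by simp : a ∈ _), ht.1 (by simp : b ∈ _), h], rfl⟩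
    · exact ⟨(b, a), by simp [Finset.mem_filter, Finset.mem_product,
        ht.1 (by simp : a ∈ _), ht.1 (by simp : b ∈ _), h], by
        rw [Finset.pair_comm]⟩

lemma le_one_add_choose (k : ℕ) : k ≤ 1 + k.choose 2 := by
  cases k with
  | zero => simp
  | succ s =>
    have h : (s + 1).choose 2 = s.choose 1 + s.choose 2 := Nat.choose_succ_succ s 1
    rw [h, Nat.choose_one_right]
    omega

lemma dim_zero_card {n : ℕ} (A : Finset (Fin n → ℤ))
    (hdim : ∀ I : Finset (Fin n), ContainsBox A I → I.card ≤ 0) : A.card ≤ 1 := by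
  apply Finset.card_le_one.mpr
  intro x hx y hy
  by_contra hne
  have hex : ∃ i, x i ≠ y i := by
    by_contra h; push_neg at h; exact hne (funext h)
  obtain ⟨i, hi⟩ := hex
  have hbox : ContainsBox A {i} := by
    refine ⟨fun _ => x i, fun _ => y i, fun _ => hi, ?_⟩
    intro c hc
    rcases hc ⟨i, Finset.mem_singleton_self i⟩ with h|h
    · refine ⟨x, hx, fun j => ?_⟩
      have hj : j = ⟨i, Finset.mem_singleton_self i⟩ :=
        Subtype.ext (Finset.mem_singleton.mp j.2)
      rw [hj, h]
    · refine ⟨y, hy, fun j => ?_⟩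
      have hj : j = ⟨i, Finset.mem_singleton_self i⟩ :=
        Subtype.ext (Finset.mem_singleton.mp j.2)
      rw [hj, h]
  have := hdim {i} hbox
  simp at this

lemma key {n : ℕ} (N : Fin n → ℕ) (S : Finset (Fin n)) :
    ∀ (d : ℕ) (A : Finset (Fin n → ℤ)),
    (∀ x ∈ A, ∀ i, 0 ≤ x i ∧ x i ≤ (N i : ℤ)) →
    (∀ x ∈ A, ∀ i, i ∉ S → x i = 0) →
    (∀ I, ContainsBox A I → I.card ≤ d) →
    A.card ≤ ∑ I ∈ S.powerset.filter (fun I => I.card ≤ d),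
      ∏ i ∈ I, (N i + 1).choose 2 := by
  induction S using Finset.induction_on with
  | empty =>
    intro d A hbd hz hdim
    have h1 : A.card ≤ 1 := Finset.card_le_one.mpr
      (fun x hx y hy => funext fun i => by
        rw [hz x hx i (Finset.notMem_empty i), hz y hy i (Finset.notMem_empty i)])
    refine le_trans h1 ?_
    have hmem : (∅ : Finset (Fin n)) ∈
        (∅ : Finset (Fin n)).powerset.filter (fun I => I.card ≤ d) := by simp
    calc 1 = ∏ i ∈ (∅ : Finset (Fin n)), (N i + 1).choose 2 := by simp
    _ ≤ _ := Finset.single_le_sum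
        (f := fun I => ∏ i ∈ I, (N i + 1).choose 2) (fun i _ => Nat.zero_le _) hmem
  | @insert j S' hjS' IH =>
    intro d A hbd hz hdim
    -- the empty set contributes 1 to the RHS sum
    have hrhs1 : ∀ (d' : ℕ) (T : Finset (Fin n)),
        1 ≤ ∑ I ∈ T.powerset.filter (fun I => I.card ≤ d'),
          ∏ i ∈ I, (N i + 1).choose 2 := by
      intro d' T
      have hmem : (∅ : Finset (Fin n)) ∈ T.powerset.filter (fun I => I.card ≤ d') := by
        simp
      calc 1 = ∏ i ∈ (∅ : Finset (Fin n)), (N i + 1).choose 2 := by simp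
      _ ≤ _ := Finset.single_le_sum
          (f := fun I => ∏ i ∈ I, (N i + 1).choose 2) (fun i _ => Nat.zero_le _) hmem
    cases d with
    | zero => exact le_trans (dim_zero_card A hdim) (hrhs1 0 _)
    | succ e =>
      classical
      set z : (Fin n → ℤ) → (Fin n → ℤ) := fun x => Function.update x j 0 with hzdef
      set B := A.image z with hBdef
      set F : (Fin n → ℤ) → Finset (Fin n → ℤ) :=
        fun y => A.filter (fun x => z x = y) with hFdef
      set V : (Fin n → ℤ) → Finset ℤ := fun y => (F y).image (fun x => x j) with hVdef
      set P : Finset (ℤ × ℤ) :=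
        ((Finset.Icc (0:ℤ) (N j)) ×ˢ (Finset.Icc (0:ℤ) (N j))).filter
          (fun p => p.1 < p.2) with hPdef
      -- basic facts
      have hBj : ∀ y ∈ B, y j = 0 := by
        intro y hy
        obtain ⟨x, _, rfl⟩ := Finset.mem_image.mp hy
        simp [hzdef]
      have hBup : ∀ y ∈ B, Function.update y j 0 = y := by
        intro y hy
        funext i
        by_cases h : i = j
        · subst h; simp [hBj y hy]
        · simp [Function.update_of_ne h]
      have hmemV : ∀ y ∈ B, ∀ v : ℤ, (Function.update y j v ∈ A ↔ v ∈ V y) := by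
        intro y hy v
        constructor
        · intro hv
          refine Finset.mem_image.mpr ⟨Function.update y j v, ?_, by simp⟩
          refine Finset.mem_filter.mpr ⟨hv, ?_⟩
          show Function.update (Function.update y j v) j 0 = y
          rw [Function.update_idem]
          exact hBup y hy
        · intro hv
          obtain ⟨x, hx, hxj⟩ := Finset.mem_image.mp hv
          have hx' := Finset.mem_filter.mp hx
          have : Function.update y j v = x := by
            funext i
            by_cases h : i = j
            · subst h; simp [hxj]
            · rw [Function.update_of_ne h, ← hx'.2]
              simp [hzdef, Function.update_of_ne h]
          rw [this]; exact hx'.1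
      have hFV : ∀ y, (F y).card = (V y).card := by
        intro y
        rw [hVdef]
        rw [Finset.card_image_of_injOn]
        intro x hx x' hx' hxx'
        have hx1 := Finset.mem_filter.mp hx
        have hx2 := Finset.mem_filter.mp hx'
        funext i
        by_cases h : i = j
        · subst h; exact hxx'
        · have e1 : z x i = x i := Function.update_of_ne h 0 x
          have e2 : z x' i = x' i := Function.update_of_ne h 0 x'
          rw [← e1, ← e2, hx1.2, hx2.2]
      have hVsub : ∀ y, ∀ v ∈ V y, v ∈ Finset.Icc (0:ℤ) (N j) := by
        intro y v hv
        obtain ⟨x, hx, rfl⟩ := Finset.mem_image.mp hv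
        have := hbd x (Finset.mem_filter.mp hx).1 j
        simp [Finset.mem_Icc]; exact this
      -- bounding A.card
      have hA : A.card = ∑ y ∈ B, (F y).card := Finset.card_eq_sum_card_image z A
      have hstep : ∀ y ∈ B, (F y).card ≤
          1 + (P.filter (fun p => p.1 ∈ V y ∧ p.2 ∈ V y)).card := by
        intro y hy
        have hEq : ((V y ×ˢ V y).filter fun p => p.1 < p.2)
            = P.filter (fun p => p.1 ∈ V y ∧ p.2 ∈ V y) := by
          ext ⟨u, v⟩
          simp only [hPdef, Finset.mem_filter, Finset.mem_product]
          constructor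
          · rintro ⟨⟨h1, h2⟩, h3⟩
            exact ⟨⟨⟨hVsub y u h1, hVsub y v h2⟩, h3⟩, h1, h2⟩
          · rintro ⟨⟨_, h3⟩, h1, h2⟩
            exact ⟨⟨h1, h2⟩, h3⟩
        calc (F y).card = (V y).card := hFV y
        _ ≤ 1 + (V y).card.choose 2 := le_one_add_choose _
        _ = 1 + ((V y ×ˢ V y).filter fun p => p.1 < p.2).card := by
            rw [card_lt_pairs]
        _ = _ := by rw [hEq]
      have hA2 : A.card ≤ B.card +
          ∑ p ∈ P, (B.filter (fun y => p.1 ∈ V y ∧ p.2 ∈ V y)).card := by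
        have hswap : ∑ y ∈ B, (P.filter (fun p => p.1 ∈ V y ∧ p.2 ∈ V y)).card
            = ∑ p ∈ P, (B.filter (fun y => p.1 ∈ V y ∧ p.2 ∈ V y)).card := by
          simp only [Finset.card_filter]
          exact Finset.sum_comm
        calc A.card = ∑ y ∈ B, (F y).card := hA
        _ ≤ ∑ y ∈ B, (1 + (P.filter (fun p => p.1 ∈ V y ∧ p.2 ∈ V y)).card) :=
            Finset.sum_le_sum hstep
        _ = B.card + ∑ y ∈ B, (P.filter (fun p => p.1 ∈ V y ∧ p.2 ∈ V y)).card := by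
            rw [Finset.sum_add_distrib, Finset.sum_const, smul_eq_mul, mul_one]
        _ = _ := by rw [hswap]
      -- no box of a subset of B can use coordinate j
      have noj : ∀ (C : Finset (Fin n → ℤ)), C ⊆ B → ∀ I, ContainsBox C I → j ∉ I := by
        rintro C hC I ⟨a, b, hne, hcov⟩ hjI
        obtain ⟨x, hx, hxa⟩ := hcov a (fun i => Or.inl rfl)
        obtain ⟨y, hy, hyb⟩ := hcov b (fun i => Or.inr rfl)
        apply hne ⟨j, hjI⟩
        rw [← hxa ⟨j, hjI⟩, ← hyb ⟨j, hjI⟩, hBj x (hC hx), hBj y (hC hy)]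
      -- elements of B satisfy bounds and vanish off S'
      have hBbd : ∀ y ∈ B, ∀ i, 0 ≤ y i ∧ y i ≤ (N i : ℤ) := by
        intro y hy i
        obtain ⟨x, hx, rfl⟩ := Finset.mem_image.mp hy
        by_cases h : i = j
        · subst h; simp [hzdef]
        · rw [hzdef]; simp only [Function.update_of_ne h]; exact hbd x hx i
      have hB0 : ∀ y ∈ B, ∀ i, i ∉ S' → y i = 0 := by
        intro y hy i hi
        obtain ⟨x, hx, rfl⟩ := Finset.mem_image.mp hy
        by_cases h : i = j
        · subst h; simp [hzdef]
        · rw [hzdef]; simp only [Function.update_of_ne h]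
          exact hz x hx i (by simp [Finset.mem_insert, h, hi])
      -- bound for B via IH at level e+1
      have hBdim : ∀ I, ContainsBox B I → I.card ≤ e + 1 := by
        intro I hbox
        have hjI := noj B Finset.Subset.rfl I hbox
        obtain ⟨a, b, hne, hcov⟩ := hbox
        apply hdim I
        refine ⟨a, b, hne, fun c hc => ?_⟩
        obtain ⟨y, hy, hmatch⟩ := hcov c hc
        obtain ⟨x, hx, hzx⟩ := Finset.mem_image.mp hy
        refine ⟨x, hx, fun i => ?_⟩
        have hij : i.1 ≠ j := fun h => hjI (h ▸ i.2)
        rw [← hmatch i, ← hzx]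
        exact (Function.update_of_ne hij 0 x).symm
      have hBcard : B.card ≤ ∑ I ∈ S'.powerset.filter (fun I => I.card ≤ e + 1),
          ∏ i ∈ I, (N i + 1).choose 2 := IH (e+1) B hBbd hB0 hBdim
      -- bound for each D p via IH at level e
      have hDcard : ∀ p ∈ P, (B.filter (fun y => p.1 ∈ V y ∧ p.2 ∈ V y)).card ≤
          ∑ I ∈ S'.powerset.filter (fun I => I.card ≤ e),
            ∏ i ∈ I, (N i + 1).choose 2 := by
        intro p hp
        have hplt : p.1 < p.2 := (Finset.mem_filter.mp hp).2
        set D := B.filter (fun y => p.1 ∈ V y ∧ p.2 ∈ V y) with hDdef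
        apply IH e D
        · exact fun y hy i => hBbd y (Finset.filter_subset _ _ hy) i
        · exact fun y hy i hi => hB0 y (Finset.filter_subset _ _ hy) i hi
        · intro I hbox
          have hjI := noj D (Finset.filter_subset _ _) I hbox
          obtain ⟨a, b, hne, hcov⟩ := hbox
          have hbig : ContainsBox A (insert j I) := by
            refine ⟨fun i => if h : i.1 ∈ I then a ⟨i.1, h⟩ else p.1,
                    fun i => if h : i.1 ∈ I then b ⟨i.1, h⟩ else p.2, ?_, ?_⟩
            · intro i
              by_cases h : i.1 ∈ I
              · simp only [dif_pos h]; exact hne ⟨i.1, h⟩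
              · simp only [dif_neg h]; exact ne_of_lt hplt
            · intro c hc
              set cI : {i // i ∈ I} → ℤ :=
                fun i => c ⟨i.1, Finset.mem_insert_of_mem i.2⟩ with hcIdef
              have hcI : ∀ i, cI i = a i ∨ cI i = b i := by
                intro i
                have := hc ⟨i.1, Finset.mem_insert_of_mem i.2⟩
                simpa only [dif_pos i.2] using this
              obtain ⟨y, hyD, hymatch⟩ := hcov cI hcI
              have hyB : y ∈ B := (Finset.mem_filter.mp hyD).1
              have hyV := (Finset.mem_filter.mp hyD).2
              have hjmem : j ∈ insert j I := Finset.mem_insert_self j I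
              have hcj : c ⟨j, hjmem⟩ = p.1 ∨ c ⟨j, hjmem⟩ = p.2 := by
                have := hc ⟨j, hjmem⟩
                simpa only [dif_neg hjI] using this
              have hcjV : c ⟨j, hjmem⟩ ∈ V y := by
                rcases hcj with h|h <;> rw [h]
                · exact hyV.1
                · exact hyV.2
              refine ⟨Function.update y j (c ⟨j, hjmem⟩),
                (hmemV y hyB _).mpr hcjV, fun i => ?_⟩
              by_cases h : i.1 = j
              · have : i = ⟨j, hjmem⟩ := Subtype.ext h
                rw [this]
                simp
              · have hiI : i.1 ∈ I := by
                  rcases Finset.mem_insert.mp i.2 with h'|h'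
                  · exact absurd h' h
                  · exact h'
                rw [Function.update_of_ne h]
                have := hymatch ⟨i.1, hiI⟩
                rw [this]
          have := hdim (insert j I) hbig
          rw [Finset.card_insert_of_notMem hjI] at this
          omega
      have hPcard : P.card = (N j + 1).choose 2 := by
        rw [hPdef, card_lt_pairs]
        congr 1
        rw [Int.card_Icc]
        simp
      have hsum2 : ∑ p ∈ P, (B.filter (fun y => p.1 ∈ V y ∧ p.2 ∈ V y)).card ≤
          (N j + 1).choose 2 * ∑ I ∈ S'.powerset.filter (fun I => I.card ≤ e),
            ∏ i ∈ I, (N i + 1).choose 2 := by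
        calc _ ≤ ∑ _p ∈ P, ∑ I ∈ S'.powerset.filter (fun I => I.card ≤ e),
              ∏ i ∈ I, (N i + 1).choose 2 := Finset.sum_le_sum hDcard
        _ = P.card * _ := by rw [Finset.sum_const, smul_eq_mul]
        _ = _ := by rw [hPcard]
      -- the splitting identity for the RHS
      have hsplit : ∑ I ∈ (insert j S').powerset.filter (fun I => I.card ≤ e + 1),
            ∏ i ∈ I, (N i + 1).choose 2
          = (∑ I ∈ S'.powerset.filter (fun I => I.card ≤ e + 1),
              ∏ i ∈ I, (N i + 1).choose 2)
            + (N j + 1).choose 2 * ∑ I ∈ S'.powerset.filter (fun I => I.card ≤ e),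
              ∏ i ∈ I, (N i + 1).choose 2 := by
        rw [← Finset.sum_filter_add_sum_filter_not
          ((insert j S').powerset.filter (fun I => I.card ≤ e + 1)) (fun I => j ∈ I)]
        have hnot : ((insert j S').powerset.filter (fun I => I.card ≤ e + 1)).filter
            (fun I => ¬ j ∈ I) = S'.powerset.filter (fun I => I.card ≤ e + 1) := by
          ext I
          simp only [Finset.mem_filter, Finset.mem_powerset]
          constructor
          · rintro ⟨⟨hsub, hcard⟩, hnj⟩
            refine ⟨fun x hx => ?_, hcard⟩
            rcases Finset.mem_insert.mp (hsub hx) with rfl|h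
            · exact absurd hx hnj
            · exact h
          · rintro ⟨hsub, hcard⟩
            exact ⟨⟨hsub.trans (Finset.subset_insert j S'), hcard⟩,
              fun h => hjS' (hsub h)⟩
        have hyes : ((insert j S').powerset.filter (fun I => I.card ≤ e + 1)).filter
            (fun I => j ∈ I)
            = (S'.powerset.filter (fun I => I.card ≤ e)).image (insert j) := by
          ext I
          simp only [Finset.mem_filter, Finset.mem_powerset, Finset.mem_image]
          constructor
          · rintro ⟨⟨hsub, hcard⟩, hjI⟩
            refine ⟨I.erase j, ⟨?_, ?_⟩, Finset.insert_erase hjI⟩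
            · intro x hx
              have hx1 := Finset.mem_erase.mp hx
              rcases Finset.mem_insert.mp (hsub hx1.2) with h|h
              · exact absurd h hx1.1
              · exact h
            · rw [Finset.card_erase_of_mem hjI]
              omega
          · rintro ⟨J, ⟨hJsub, hJcard⟩, rfl⟩
            have hjJ : j ∉ J := fun h => hjS' (hJsub h)
            refine ⟨⟨Finset.insert_subset_insert j hJsub, ?_⟩,
              Finset.mem_insert_self j J⟩
            rw [Finset.card_insert_of_notMem hjJ]
            omega
        rw [hnot, hyes]
        rw [Finset.sum_image (fun J hJ J' hJ' h => by
          have hjJ : j ∉ J := fun hh =>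
            hjS' ((Finset.mem_powerset.mp (Finset.mem_filter.mp hJ).1) hh)
          have hjJ' : j ∉ J' := fun hh =>
            hjS' ((Finset.mem_powerset.mp (Finset.mem_filter.mp hJ').1) hh)
          rw [← Finset.erase_insert hjJ, ← Finset.erase_insert hjJ', h])]
        have : ∀ J ∈ S'.powerset.filter (fun I => I.card ≤ e),
            ∏ i ∈ insert j J, (N i + 1).choose 2
              = (N j + 1).choose 2 * ∏ i ∈ J, (N i + 1).choose 2 := by
          intro J hJ
          have hjJ : j ∉ J := fun hh =>
            hjS' ((Finset.mem_powerset.mp (Finset.mem_filter.mp hJ).1) hh)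
          rw [Finset.prod_insert hjJ]
        rw [Finset.sum_congr rfl this, ← Finset.mul_sum]
        ring
      rw [hsplit]
      calc A.card ≤ B.card + ∑ p ∈ P,
            (B.filter (fun y => p.1 ∈ V y ∧ p.2 ∈ V y)).card := hA2
      _ ≤ _ := Nat.add_le_add hBcard hsum2

/-- **Haussler–Long (Corollary 2.6(iii)).** If `A ⊆ ∏_i {0,…,N i}` has
Natarajan dimension at most `d`, then
`#A ≤ ∑_{#I ≤ d} ∏_{i∈I} C(N i + 1, 2)` (the empty `I` contributing `1`). -/
theorem haussler_long_natarajan (n d : ℕ) (N : Fin n → ℕ)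
    (A : Finset (Fin n → ℤ))
    (hbd : ∀ x ∈ A, ∀ i, 0 ≤ x i ∧ x i ≤ (N i : ℤ))
    (hdim : ∀ I : Finset (Fin n), ContainsBox A I → I.card ≤ d) :
    A.card ≤ ∑ I ∈ (Finset.univ : Finset (Finset (Fin n))).filter
      (fun I => I.card ≤ d), ∏ i ∈ I, (N i + 1).choose 2 := by
  have := key N Finset.univ d A hbd (fun x hx i hi => absurd (Finset.mem_univ i) hi) hdim
  simpa [Finset.powerset_univ] using this
end

section
/- Let K be a bounded convex set in ℝ^n with nonempty interior, 0 < k < n an integer, and suppose that for every subset I ⊆ {1,...,n} with #I ≤ n - k one has vol_{#I}(P_I K) ≤ (1/a)^{n - #I} · vol_n(K/4), where a > 0. Then there exists a subset J ⊆ {1,...,n} with #J ≥ n - k that is a-shattered by K, i.e. v(K, a) ≥ n - k. -/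
/-!
Suppose no set of at least `n - k` coordinates is `a`-shattered by `K`. For a translate `t`,
let `A ⊆ ℤ^n` be the lattice points `x` with `t + a x ∈ K`. By Pajor's lemma `#A` is at most
the number of pairs `(I, h)` at which `A` shatters `I`; each such `I` is `a`-shattered by `K`,
and for fixed `I` the disjoint cubes `t_I + a h + [0, a)^I` all lie in the convex set `P_I K`.
Hence `#A · a^n ≤ ∑_{I shattered} a^(n - #I) vol(P_I K)`, and averaging over `t ∈ [0, a)^n`
turns the left side into `vol K`. By hypothesis each term is at most `vol K / 4^n`, and fewer
than `2^n` sets are shattered (not all of `Fin n`), so `vol K < vol K`.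
-/

open MeasureTheory

/-- The coordinate projection of `K ⊆ ℝ^n` onto the coordinates in `I`. -/
def projSet {n : ℕ} (K : Set (Fin n → ℝ)) (I : Finset (Fin n)) :
    Set ({i // i ∈ I} → ℝ) :=
  {z | ∃ x ∈ K, ∀ i : {i // i ∈ I}, x i.1 = z i}

/-- `J` is `t`-shattered by `K ⊆ ℝ^n`: there is a level function `h` such
that for every partition of `J` into `S` and `J \ S` some `x ∈ K` satisfies
`x i ≥ h i + t` on `S` and `x i ≤ h i` on `J \ S`. -/
def TShattered {n : ℕ} (K : Set (Fin n → ℝ)) (J : Finset (Fin n)) (t : ℝ) : Prop :=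
  ∃ h : Fin n → ℝ, ∀ S ⊆ J, ∃ x ∈ K,
    (∀ i ∈ S, h i + t ≤ x i) ∧ (∀ i ∈ J \ S, x i ≤ h i)

open Finset Bornology Function
open scoped ENNReal

section IntegerShattering

variable {ι : Type*}

def IntShatters (A : Finset (ι → ℤ)) (I : Finset ι) (h : I → ℤ) : Prop :=
  ∀ S : Finset I, ∃ x ∈ A, ∀ i : I, (i ∈ S → h i < x i) ∧ (i ∉ S → x i ≤ h i)

lemma finite_setOf_intShatters (A : Finset (ι → ℤ)) (I : Finset ι) :
    {h | IntShatters A I h}.Finite := by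
  refine (Set.Finite.pi (t := fun i : I => ⋃ x ∈ A, ⋃ y ∈ A, Set.Ico (y i) (x i))
    fun i => A.finite_toSet.biUnion fun x _ => A.finite_toSet.biUnion fun y _ =>
      Set.finite_Ico _ _).subset fun h hh => Set.mem_univ_pi.2 fun i => ?_
  obtain ⟨x, hx, hx'⟩ := hh univ
  obtain ⟨y, hy, hy'⟩ := hh ∅
  exact Set.mem_biUnion hx <|
    Set.mem_biUnion hy ⟨(hy' i).2 (notMem_empty i), (hx' i).1 (mem_univ i)⟩

noncomputable def shatteringLevels (A : Finset (ι → ℤ)) (I : Finset ι) : Finset (I → ℤ) :=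
  (finite_setOf_intShatters A I).toFinset

@[simp]
lemma mem_shatteringLevels {A : Finset (ι → ℤ)} {I : Finset ι} {h : I → ℤ} :
    h ∈ shatteringLevels A I ↔ IntShatters A I h :=
  Set.Finite.mem_toFinset _

variable [Fintype ι] [DecidableEq ι]

noncomputable def hypograph (L : ℤ) (x : ι → ℤ) : Finset (ι × ℤ) :=
  univ.biUnion fun i => {i} ×ˢ Ico L (x i)

@[simp]
lemma mem_hypograph {L : ℤ} {x : ι → ℤ} {p : ι × ℤ} :
    p ∈ hypograph L x ↔ L ≤ p.2 ∧ p.2 < x p.1 := by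
  obtain ⟨i, v⟩ := p
  simp [hypograph]

lemma hypograph_injOn (L : ℤ) : Set.InjOn (hypograph (ι := ι) L) {x | ∀ i, L ≤ x i} := by
  intro x hx y hy hxy
  funext i
  have key : ∀ x y : ι → ℤ, (∀ i, L ≤ x i) → hypograph L x = hypograph L y → y i ≤ x i := by
    intro x y hx hxy
    by_contra! hlt
    have : (i, x i) ∈ hypograph L y := mem_hypograph.2 ⟨hx i, hlt⟩
    rw [← hxy, mem_hypograph] at this
    exact lt_irrefl _ this.2
  exact le_antisymm (key y x hy hxy.symm) (key x y hx hxy)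

variable {L : ℤ} {A : Finset (ι → ℤ)} {s : Finset (ι × ℤ)}

lemma Finset.Shatters.le_snd_of_hypograph (hs : (A.image (hypograph L)).Shatters s) {p : ι × ℤ}
    (hp : p ∈ s) : L ≤ p.2 := by
  obtain ⟨u, hu, hsu⟩ := hs.exists_superset
  obtain ⟨x, -, rfl⟩ := mem_image.1 hu
  exact (mem_hypograph.1 (hsu hp)).1

lemma Finset.Shatters.eq_of_fst_eq (hs : (A.image (hypograph L)).Shatters s) {p q : ι × ℤ}
    (hp : p ∈ s) (hq : q ∈ s) (hpq : p.1 = q.1) : p = q := by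
  wlog hlt : p.2 < q.2 generalizing p q
  · rcases (not_lt.1 hlt).lt_or_eq with hlt' | heq
    · exact (this hq hp hpq.symm hlt').symm
    · exact Prod.ext hpq heq.symm
  obtain ⟨u, hu, hsu⟩ := hs.exists_inter_eq_singleton hq
  obtain ⟨x, -, rfl⟩ := mem_image.1 hu
  have hqx := mem_hypograph.1 (mem_of_mem_inter_right (hsu ▸ mem_singleton_self q))
  have : p ∈ s ∩ hypograph L x :=
    mem_inter.2 ⟨hp, mem_hypograph.2 ⟨hs.le_snd_of_hypograph hp, hpq ▸ hlt.trans hqx.2⟩⟩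
  rw [hsu, mem_singleton] at this
  exact absurd (this ▸ hlt) (lt_irrefl _)

lemma Finset.Shatters.exists_intShatters (hs : (A.image (hypograph L)).Shatters s) :
    ∃ I : Finset ι, ∃ h : I → ℤ, IntShatters A I h ∧ univ.image (fun i : I => (i.1, h i)) = s := by
  have hfst : ∀ i : s.image Prod.fst, ∃ v, (i.1, v) ∈ s := fun i => by
    obtain ⟨p, hp, hpi⟩ := mem_image.1 i.2
    exact ⟨p.2, hpi ▸ hp⟩
  choose h hh using hfst
  refine ⟨_, h, fun S => ?_, ?_⟩
  · obtain ⟨u, hu, hsu⟩ := hs (t := S.image fun i => (i.1, h i))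
      (image_subset_iff.2 fun i _ => hh i)
    obtain ⟨x, hx, rfl⟩ := mem_image.1 hu
    refine ⟨x, hx, fun i => ⟨fun hi => ?_, fun hi => ?_⟩⟩
    · have : (i.1, h i) ∈ s ∩ hypograph L x := hsu ▸ mem_image_of_mem _ hi
      exact (mem_hypograph.1 (mem_inter.1 this).2).2
    · by_contra! hlt
      have : (i.1, h i) ∈ s ∩ hypograph L x :=
        mem_inter.2 ⟨hh i, mem_hypograph.2 ⟨hs.le_snd_of_hypograph (hh i), hlt⟩⟩
      obtain ⟨j, hj, hji⟩ := mem_image.1 (hsu ▸ this)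
      exact hi (Subtype.ext (congrArg Prod.fst hji) ▸ hj)
  · ext p
    refine ⟨fun hp => ?_, fun hp => ?_⟩
    · obtain ⟨i, -, rfl⟩ := mem_image.1 hp
      exact hh i
    · exact mem_image.2 ⟨⟨p.1, mem_image_of_mem _ hp⟩, mem_univ _,
        hs.eq_of_fst_eq (hh _) hp rfl⟩

/-- Pajor's lemma for integer points, reduced to the one for set families by encoding each
point as its hypograph. -/
theorem card_le_sum_card_shatteringLevels (A : Finset (ι → ℤ)) :
    #A ≤ ∑ I, #(shatteringLevels A I) := by
  obtain ⟨L, hL⟩ : ∃ L : ℤ, ∀ x ∈ A, ∀ i, L ≤ x i := by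
    obtain ⟨L, hL⟩ := (A.biUnion fun x => univ.image x).finite_toSet.bddBelow
    exact ⟨L, fun x hx i => hL (by simp only [coe_biUnion]; exact Set.mem_biUnion hx (by simp))⟩
  calc #A = #(A.image (hypograph L)) :=
        (card_image_of_injOn ((hypograph_injOn L).mono fun x hx => hL x hx)).symm
    _ ≤ #(A.image (hypograph L)).shatterer := card_le_card_shatterer _
    _ ≤ #(univ.sigma (shatteringLevels A)) := by
        refine card_le_card_of_surjOn (fun p => univ.image fun i : p.1 => (i.1, p.2 i)) ?_
        intro s hs
        obtain ⟨I, h, hh, rfl⟩ := (mem_shatterer.1 hs).exists_intShatters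
        exact ⟨⟨I, h⟩, mem_sigma.2 ⟨mem_univ _, mem_shatteringLevels.2 hh⟩, rfl⟩
    _ = ∑ I, #(shatteringLevels A I) := card_sigma _ _

end IntegerShattering

section LatticeCubes

variable {ι : Type*}

def latticePoint (t : ι → ℝ) (a : ℝ) (x : ι → ℤ) : ι → ℝ := fun i => t i + a * x i

def halfOpenCube (p : ι → ℝ) (a : ℝ) : Set (ι → ℝ) := Set.univ.pi fun i => Set.Ico (p i) (p i + a)

lemma latticePoint_eq_add (t : ι → ℝ) (a : ℝ) (x : ι → ℤ) :
    latticePoint t a x = t + fun i => a * x i := by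
  ext i; simp [latticePoint]

lemma measurableSet_halfOpenCube [Countable ι] (p : ι → ℝ) (a : ℝ) :
    MeasurableSet (halfOpenCube p a) :=
  MeasurableSet.univ_pi fun _ => measurableSet_Ico

lemma volume_halfOpenCube [Fintype ι] (p : ι → ℝ) (a : ℝ) :
    volume (halfOpenCube p a) = ENNReal.ofReal a ^ Fintype.card ι := by
  simp [halfOpenCube, Real.volume_pi_Ico]

lemma preimage_add_halfOpenCube (p c : ι → ℝ) (a : ℝ) :
    (· + c) ⁻¹' halfOpenCube p a = halfOpenCube (p - c) a := by
  ext y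
  simp only [halfOpenCube, Set.mem_preimage, Set.mem_univ_pi, Set.mem_Ico, Pi.add_apply,
    Pi.sub_apply]
  exact forall_congr' fun i => by constructor <;> rintro ⟨h₁, h₂⟩ <;> constructor <;> linarith

lemma mem_halfOpenCube_latticePoint_iff {a : ℝ} (ha : 0 < a) {t y : ι → ℝ} {x : ι → ℤ} :
    y ∈ halfOpenCube (latticePoint t a x) a ↔ (fun i => toIcoDiv ha (t i) (y i)) = x := by
  simp only [halfOpenCube, latticePoint, Set.mem_univ_pi, funext_iff, toIcoDiv_eq_iff,
    Set.mem_Ico, zsmul_eq_mul]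
  exact forall_congr' fun i => by constructor <;> rintro ⟨h₁, h₂⟩ <;> constructor <;> linarith

lemma pairwise_disjoint_halfOpenCube_latticePoint {a : ℝ} (ha : 0 < a) (t : ι → ℝ) :
    Pairwise (Disjoint on fun x => halfOpenCube (latticePoint t a x) a) :=
  fun _ _ hne => Set.disjoint_left.2 fun _ hy hy' =>
    hne (((mem_halfOpenCube_latticePoint_iff ha).1 hy).symm.trans
      ((mem_halfOpenCube_latticePoint_iff ha).1 hy'))

lemma iUnion_halfOpenCube_latticePoint {a : ℝ} (ha : 0 < a) (t : ι → ℝ) :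
    ⋃ x, halfOpenCube (latticePoint t a x) a = Set.univ :=
  Set.iUnion_eq_univ_iff.2 fun _ => ⟨_, (mem_halfOpenCube_latticePoint_iff ha).2 rfl⟩

theorem lintegral_encard_latticePoint_mem [Fintype ι] {U : Set (ι → ℝ)} (hU : MeasurableSet U)
    {a : ℝ} (ha : 0 < a) :
    ∫⁻ t in halfOpenCube 0 a, ({x | latticePoint t a x ∈ U}.encard : ℝ≥0∞) = volume U := by
  have hshift : ∀ x, (fun t => U.indicator 1 (latticePoint t a x)) =
      ((· + fun i => a * x i) ⁻¹' U).indicator (1 : (ι → ℝ) → ℝ≥0∞) := fun x => by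
    ext t
    rw [latticePoint_eq_add]
    rfl
  have hterm : ∀ x, ∫⁻ t in halfOpenCube 0 a, U.indicator 1 (latticePoint t a x) =
      volume (U ∩ halfOpenCube (latticePoint 0 a x) a) := fun x => by
    rw [hshift, latticePoint_eq_add, zero_add,
      ← measure_preimage_add_right volume (fun i => a * x i), Set.preimage_inter,
      preimage_add_halfOpenCube, sub_self,
      ← Measure.restrict_apply' (measurableSet_halfOpenCube _ _),
      ← lintegral_indicator_one (measurable_add_const _ hU)]
  calc ∫⁻ t in halfOpenCube 0 a, ({x | latticePoint t a x ∈ U}.encard : ℝ≥0∞)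
      = ∫⁻ t in halfOpenCube 0 a, ∑' x, U.indicator 1 (latticePoint t a x) := by
        congr! 2 with t
        rw [← ENNReal.tsum_set_one]
        exact (_root_.tsum_subtype _ 1).trans (tsum_congr fun x => rfl)
    _ = ∑' x, volume (U ∩ halfOpenCube (latticePoint 0 a x) a) := by
        rw [lintegral_tsum fun x => ?_]
        · exact tsum_congr hterm
        rw [hshift]
        exact (measurable_one.indicator (measurable_add_const _ hU)).aemeasurable
    _ = volume U := by
        have hdisj : Pairwise (Disjoint on fun x => U ∩ halfOpenCube (latticePoint 0 a x) a) :=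
          fun x y hxy => (pairwise_disjoint_halfOpenCube_latticePoint ha 0 hxy).mono
            Set.inter_subset_right Set.inter_subset_right
        rw [← measure_iUnion hdisj fun x => hU.inter (measurableSet_halfOpenCube _ _),
          ← Set.inter_iUnion, iUnion_halfOpenCube_latticePoint ha, Set.inter_univ]

theorem card_mul_le_volume_of_halfOpenCube_subset [Fintype ι] {P : Set (ι → ℝ)} {a : ℝ}
    (ha : 0 < a) (t : ι → ℝ) (H : Finset (ι → ℤ))
    (hH : ∀ h ∈ H, halfOpenCube (latticePoint t a h) a ⊆ P) :
    #H * ENNReal.ofReal a ^ Fintype.card ι ≤ volume P :=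
  calc #H * ENNReal.ofReal a ^ Fintype.card ι
      = ∑ h ∈ H, volume (halfOpenCube (latticePoint t a h) a) := by
        simp [volume_halfOpenCube]
    _ = volume (⋃ h ∈ H, halfOpenCube (latticePoint t a h) a) :=
        (measure_biUnion_finset
          ((pairwise_disjoint_halfOpenCube_latticePoint ha t).set_pairwise H)
          fun _ _ => measurableSet_halfOpenCube _ _).symm
    _ ≤ volume P := measure_mono (Set.iUnion₂_subset hH)

/-- A functional separating a point of the box from `P` would be beaten by the point chosen
for `S = {i | 0 < f eᵢ}`. -/
theorem Convex.univ_pi_Icc_subset [Fintype ι] {P : Set (ι → ℝ)} (hP : Convex ℝ P)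
    {l : ι → ℝ} {a : ℝ}
    (H : ∀ S : Finset ι, ∃ y ∈ P, (∀ i ∈ S, l i + a ≤ y i) ∧ (∀ i ∉ S, y i ≤ l i)) :
    Set.univ.pi (fun i => Set.Icc (l i) (l i + a)) ⊆ P := by
  classical
  choose y hyP hy₁ hy₂ using H
  intro z hz
  simp only [Set.mem_univ_pi, Set.mem_Icc] at hz
  refine convexHull_min (Set.range_subset_iff.2 hyP) hP ?_
  by_contra hzc
  obtain ⟨f, u, hfu, huz⟩ := geometric_hahn_banach_closed_point (convex_convexHull ℝ _)
    ((Set.finite_range y).isCompact_convexHull (𝕜 := ℝ)).isClosed hzc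
  set w : ι → ℝ := fun i => f fun j => if i = j then 1 else 0
  have hle : f z ≤ f (y (univ.filter (0 < w ·))) := by
    rw [← f.coe_coe, LinearMap.pi_apply_eq_sum_univ, LinearMap.pi_apply_eq_sum_univ]
    refine sum_le_sum fun i _ => ?_
    by_cases hwi : 0 < w i
    · exact mul_le_mul_of_nonneg_right ((hz i).2.trans (hy₁ _ i (by simpa using hwi))) hwi.le
    · exact mul_le_mul_of_nonpos_right ((hy₂ _ i (by simpa using hwi)).trans (hz i).1)
        (not_lt.1 hwi)
  linarith [hfu _ (subset_convexHull ℝ _ ⟨univ.filter (0 < w ·), rfl⟩)]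

lemma finite_setOf_latticePoint_mem [Fintype ι] {U : Set (ι → ℝ)} (hU : IsBounded U)
    (t : ι → ℝ) {a : ℝ} (ha : a ≠ 0) : {x : ι → ℤ | latticePoint t a x ∈ U}.Finite := by
  obtain ⟨r, hr⟩ := isBounded_iff_forall_norm_le.1 hU
  have hV : IsBounded {z : ι → ℝ | t + a • z ∈ U} :=
    isBounded_iff_forall_norm_le.2 ⟨‖a⁻¹‖ * (r + ‖t‖), fun z hz => calc
      ‖z‖ = ‖a⁻¹ • ((t + a • z) - t)‖ := by rw [add_sub_cancel_left, inv_smul_smul₀ ha]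
      _ ≤ ‖a⁻¹‖ * (r + ‖t‖) := by
        rw [norm_smul]
        gcongr
        exact (norm_sub_le _ _).trans (by gcongr; exact hr _ hz)⟩
  convert Metric.finite_isBounded_inter_isClosed DiscreteTopology.isDiscrete
    (Real.isometry_intCast.postcomp_pi.antilipschitz.isBounded_preimage hV) isClosed_univ using 1
  rw [Set.inter_univ]
  rfl

end LatticeCubes

section Projections

variable {n : ℕ} {K : Set (Fin n → ℝ)}

lemma projSet_eq_image (K : Set (Fin n → ℝ)) (I : Finset (Fin n)) :
    projSet K I = LinearMap.funLeft ℝ ℝ ((↑) : I → Fin n) '' K := by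
  ext z
  simp only [projSet, Set.mem_image, funext_iff]
  rfl

lemma convex_projSet (hK : Convex ℝ K) (I : Finset (Fin n)) : Convex ℝ (projSet K I) :=
  projSet_eq_image K I ▸ hK.linear_image _

lemma isBounded_projSet (hK : IsBounded K) (I : Finset (Fin n)) : IsBounded (projSet K I) :=
  projSet_eq_image K I ▸ (LinearMap.toContinuousLinearMap _).lipschitz.isBounded_image hK

lemma add_mul_add_le_add_mul {t a : ℝ} (ha : 0 ≤ a) {m k : ℤ} (hmk : m < k) :
    t + a * m + a ≤ t + a * k := by
  have : (m : ℝ) + 1 ≤ k := by exact_mod_cast hmk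
  nlinarith

variable {t : Fin n → ℝ} {a : ℝ} {A : Finset (Fin n → ℤ)} {I : Finset (Fin n)} {h : I → ℤ}

lemma IntShatters.tShattered (ha : 0 ≤ a) (hA : ∀ x ∈ A, latticePoint t a x ∈ K)
    (hh : IntShatters A I h) : TShattered K I a := by
  classical
  refine ⟨fun i => t i + a * if hi : i ∈ I then h ⟨i, hi⟩ else 0, fun S hS => ?_⟩
  obtain ⟨x, hx, hxh⟩ := hh (S.subtype (· ∈ I))
  refine ⟨_, hA x hx, fun i hi => ?_, fun i hi => ?_⟩
  · simpa [latticePoint, dif_pos (hS hi)] using add_mul_add_le_add_mul (t := t i) ha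
      ((hxh ⟨i, hS hi⟩).1 (by simpa using hi))
  · obtain ⟨hiI, hiS⟩ := mem_sdiff.1 hi
    have : (x i : ℝ) ≤ h ⟨i, hiI⟩ := by exact_mod_cast (hxh ⟨i, hiI⟩).2 (by simpa using hiS)
    simp only [latticePoint, dif_pos hiI]
    gcongr

lemma IntShatters.halfOpenCube_subset_projSet (hK : Convex ℝ K) (ha : 0 ≤ a)
    (hA : ∀ x ∈ A, latticePoint t a x ∈ K) (hh : IntShatters A I h) :
    halfOpenCube (latticePoint (fun i : I => t i) a h) a ⊆ projSet K I := by
  refine (Set.pi_mono fun _ _ => Set.Ico_subset_Icc_self).trans <|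
    (convex_projSet hK I).univ_pi_Icc_subset fun S => ?_
  obtain ⟨x, hx, hxh⟩ := hh S
  refine ⟨fun i => latticePoint t a x i, ⟨_, hA x hx, fun i => rfl⟩,
    fun i hi => add_mul_add_le_add_mul ha ((hxh i).1 hi), fun i hi => ?_⟩
  have : (x i : ℝ) ≤ h i := by exact_mod_cast (hxh i).2 hi
  simp only [latticePoint]
  gcongr

open scoped Classical in
theorem card_mul_le_sum_projSet (hK : Convex ℝ K) (ha : 0 < a)
    (hA : ∀ x ∈ A, latticePoint t a x ∈ K) :
    #A * ENNReal.ofReal a ^ n ≤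
      ∑ I with TShattered K I a, ENNReal.ofReal a ^ (n - #I) * volume (projSet K I) := by
  have hlevels : ∀ I, #(shatteringLevels A I) * ENNReal.ofReal a ^ #I ≤ volume (projSet K I) :=
    fun I => by
      simpa using card_mul_le_volume_of_halfOpenCube_subset ha (fun i : I => t i) _
        fun h hh => (mem_shatteringLevels.1 hh).halfOpenCube_subset_projSet hK ha.le hA
  have hshattered : ∀ I ∈ univ, (#(shatteringLevels A I) * ENNReal.ofReal a ^ n : ℝ≥0∞) ≠ 0 →
      TShattered K I a := fun I _ hI => by
    obtain ⟨h, hh⟩ := card_ne_zero.1 (by exact_mod_cast left_ne_zero_of_mul hI)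
    exact (mem_shatteringLevels.1 hh).tShattered ha.le hA
  calc (#A : ℝ≥0∞) * ENNReal.ofReal a ^ n
      ≤ ∑ I, #(shatteringLevels A I) * ENNReal.ofReal a ^ n := by
        rw [← sum_mul]
        gcongr
        exact_mod_cast card_le_sum_card_shatteringLevels A
    _ = ∑ I with TShattered K I a,
          #(shatteringLevels A I) * ENNReal.ofReal a ^ #I * ENNReal.ofReal a ^ (n - #I) := by
        rw [← sum_filter_of_ne hshattered]
        refine sum_congr rfl fun I _ => ?_
        rw [mul_assoc, ← pow_add,
          Nat.add_sub_cancel' (card_le_univ I |>.trans_eq (Fintype.card_fin n))]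
    _ ≤ _ := sum_le_sum fun I _ => (mul_le_mul_left (hlevels I) _).trans_eq (mul_comm _ _)

open scoped Classical in
theorem volume_le_sum_projSet (hK : Convex ℝ K) (hKb : IsBounded K) (ha : 0 < a) :
    volume K ≤
      ∑ I with TShattered K I a, ENNReal.ofReal a ^ (n - #I) * volume (projSet K I) := by
  set B := ∑ I with TShattered K I a, ENNReal.ofReal a ^ (n - #I) * volume (projSet K I)
  have hq₀ : ENNReal.ofReal a ^ n ≠ 0 := pow_ne_zero _ (ENNReal.ofReal_pos.2 ha).ne'
  have hq : ENNReal.ofReal a ^ n ≠ ⊤ := ENNReal.pow_ne_top ENNReal.ofReal_ne_top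
  have hpoint : ∀ t,
      ({x | latticePoint t a x ∈ interior K}.encard : ℝ≥0∞) * ENNReal.ofReal a ^ n ≤ B := by
    intro t
    have hfin := finite_setOf_latticePoint_mem (hKb.subset interior_subset) t ha.ne'
    rw [hfin.encard_eq_coe_toFinset_card]
    exact_mod_cast card_mul_le_sum_projSet hK ha fun x hx =>
      interior_subset (hfin.mem_toFinset.1 hx)
  refine (ENNReal.mul_le_mul_iff_left hq₀ hq).1 ?_
  calc volume K * ENNReal.ofReal a ^ n
      = (∫⁻ t in halfOpenCube 0 a, ({x | latticePoint t a x ∈ interior K}.encard : ℝ≥0∞)) *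
          ENNReal.ofReal a ^ n := by
        rw [lintegral_encard_latticePoint_mem isOpen_interior.measurableSet ha,
          measure_interior_of_null_frontier (hK.addHaar_frontier volume)]
    _ = ∫⁻ t in halfOpenCube 0 a, ({x | latticePoint t a x ∈ interior K}.encard : ℝ≥0∞) *
          ENNReal.ofReal a ^ n := (lintegral_mul_const' _ _ hq).symm
    _ ≤ ∫⁻ _ in halfOpenCube 0 a, B := lintegral_mono hpoint
    _ = B * ENNReal.ofReal a ^ n := by
        rw [setLIntegral_const, volume_halfOpenCube, Fintype.card_fin]

open scoped Classical in
theorem toReal_volume_le_sum_projSet (hK : Convex ℝ K) (hKb : IsBounded K) (ha : 0 < a) :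
    (volume K).toReal ≤
      ∑ I with TShattered K I a, a ^ (n - #I) * (volume (projSet K I)).toReal := by
  have hfin : ∀ I ∈ univ.filter (TShattered K · a),
      ENNReal.ofReal a ^ (n - #I) * volume (projSet K I) ≠ ⊤ := fun I _ =>
    ENNReal.mul_ne_top (ENNReal.pow_ne_top ENNReal.ofReal_ne_top)
      (isBounded_projSet hKb I).measure_lt_top.ne
  have := ENNReal.toReal_mono (ENNReal.sum_ne_top.2 hfin) (volume_le_sum_projSet hK hKb ha)
  rw [ENNReal.toReal_sum hfin] at this
  simpa [ENNReal.toReal_ofReal ha.le] using this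

end Projections

theorem comb_dim_from_volume_general (n k : ℕ)
    (K : Set (Fin n → ℝ)) (hconv : Convex ℝ K)
    (hbd : Bornology.IsBounded K) (hint : (interior K).Nonempty)
    (a : ℝ) (ha : 0 < a)
    (hvol : ∀ I : Finset (Fin n), I.card ≤ n - k →
      (volume (projSet K I)).toReal ≤
        (1 / a) ^ (n - I.card) * ((volume K).toReal / 4 ^ n)) :
    ∃ J : Finset (Fin n), n - k ≤ J.card ∧ TShattered K J a := by
  classical
  by_contra! hsmall
  set D := univ.filter fun I : Finset (Fin n) => TShattered K I a
  set V := (volume K).toReal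
  have hV : 0 < V := ENNReal.toReal_pos
    ((isOpen_interior.measure_pos volume hint).trans_le (measure_mono interior_subset)).ne'
    hbd.measure_lt_top.ne
  have hcard : (#D : ℝ) < 4 ^ n := by
    have hD : D ⊂ univ := filter_ssubset.2 ⟨univ, mem_univ _, hsmall univ (by simp)⟩
    have : #D < 2 ^ n := by simpa using card_lt_card hD
    exact_mod_cast this.trans_le (Nat.pow_le_pow_left (by norm_num) n)
  have hterm : ∀ I ∈ D, a ^ (n - #I) * (volume (projSet K I)).toReal ≤ V / 4 ^ n := by
    intro I hI
    have hIk : #I ≤ n - k := (not_le.1 fun h => hsmall I h (mem_filter.1 hI).2).le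
    calc a ^ (n - #I) * (volume (projSet K I)).toReal
        ≤ a ^ (n - #I) * ((1 / a) ^ (n - #I) * (V / 4 ^ n)) := by gcongr; exact hvol I hIk
      _ = V / 4 ^ n := by rw [← mul_assoc, ← mul_pow, mul_one_div_cancel ha.ne', one_pow, one_mul]
  have := calc V ≤ ∑ I ∈ D, a ^ (n - #I) * (volume (projSet K I)).toReal :=
        toReal_volume_le_sum_projSet hconv hbd ha
    _ ≤ #D * (V / 4 ^ n) := by simpa using sum_le_card_nsmul D _ _ hterm
    _ < 4 ^ n * (V / 4 ^ n) := by gcongr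
    _ = V := by field_simp
  exact lt_irrefl _ this

/-- **Theorem 3.4 (volume computes the combinatorial dimension).** If `K` is
a bounded convex set with nonempty interior such that every coordinate
projection onto at most `n−k` coordinates satisfies
`vol(P_I K) ≤ (1/a)^{n−#I} vol(K/4)`, then some set of at least `n−k`
coordinates is `a`-shattered by `K`, i.e. `v(K,a) ≥ n−k`. -/
theorem comb_dim_from_volume (n k : ℕ) (hk : 0 < k) (hkn : k < n)
    (K : Set (Fin n → ℝ)) (hconv : Convex ℝ K)
    (hbd : Bornology.IsBounded K) (hint : (interior K).Nonempty)
    (a : ℝ) (ha : 0 < a)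
    (hvol : ∀ I : Finset (Fin n), I.card ≤ n - k →
      (volume (projSet K I)).toReal ≤
        (1 / a) ^ (n - I.card) * ((volume K).toReal / 4 ^ n)) :
    ∃ J : Finset (Fin n), n - k ≤ J.card ∧ TShattered K J a :=
  comb_dim_from_volume_general n k K hconv hbd hint a ha hvol
end

section
/- Let w_p(n) denote the Lebesgue volume of the ball B_p^n = {x ∈ ℝ^n : Σ_{i=1}^n |x(i)|^p ≤ n} (for p = ∞, B_∞^n = [-1,1]^n). Then there is an absolute constant C such that w_p(k) ≤ C · w_p(n) whenever 1 ≤ k ≤ n and 1 ≤ p ≤ ∞. -/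
/-!
With the normalisation `∑ |x i| ^ p ≤ n`, a point of `B_p^n` extended by a last coordinate in
`[-1, 1]` lies in `B_p^{n+1}`, so `w_p(n + 1) ≥ 2 w_p(n)`. Hence both `w_p` and `w_∞(n) = 2 ^ n`
are increasing, and `C = 1` works.
-/

open MeasureTheory

/-- The normalized `L_p^n` ball `B_p^n = {x : ∑ |x i|^p ≤ n}` (finite `p`). -/
def lpBall (p : ℝ) (n : ℕ) : Set (Fin n → ℝ) :=
  {x | ∑ i, |x i| ^ p ≤ (n : ℝ)}

/-- The `L_∞^n` ball `B_∞^n = [-1,1]^n`. -/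
def cubeBall (n : ℕ) : Set (Fin n → ℝ) := {x | ∀ i, |x i| ≤ 1}

lemma measurableSet_lpBall (p : ℝ) (n : ℕ) : MeasurableSet (lpBall p n) :=
  measurableSet_le (Finset.measurable_sum _ fun i _ => (measurable_pi_apply i).abs.pow_const p)
    measurable_const

lemma abs_le_of_mem_lpBall {p : ℝ} (hp : 0 < p) {n : ℕ} {x : Fin n → ℝ} (hx : x ∈ lpBall p n)
    (i : Fin n) : |x i| ≤ (n : ℝ) ^ p⁻¹ :=
  (Real.le_rpow_inv_iff_of_pos (abs_nonneg _) n.cast_nonneg hp).2 <|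
    (Finset.single_le_sum (f := fun j => |x j| ^ p)
      (fun _ _ => Real.rpow_nonneg (abs_nonneg _) p) (Finset.mem_univ i)).trans hx

lemma volume_lpBall_lt_top {p : ℝ} (hp : 0 < p) (n : ℕ) : volume (lpBall p n) < ⊤ := by
  have hbounded : Bornology.IsBounded (lpBall p n) :=
    (Metric.isBounded_closedBall (x := 0) (r := (n : ℝ) ^ p⁻¹)).subset fun x hx =>
      mem_closedBall_zero_iff.2 <| (pi_norm_le_iff_of_nonneg (by positivity)).2 fun i =>
        abs_le_of_mem_lpBall hp hx i
  exact hbounded.measure_lt_top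

lemma two_mul_volume_lpBall_le {p : ℝ} (hp : 0 ≤ p) (n : ℕ) :
    2 * volume (lpBall p n) ≤ volume (lpBall p (n + 1)) := by
  let e := MeasurableEquiv.piFinSuccAbove (fun _ : Fin (n + 1) => ℝ) 0
  have hprod : MeasurableSet (Set.Icc (-1 : ℝ) 1 ×ˢ lpBall p n) :=
    measurableSet_Icc.prod (measurableSet_lpBall p n)
  have hsub : e ⁻¹' (Set.Icc (-1 : ℝ) 1 ×ˢ lpBall p n) ⊆ lpBall p (n + 1) := by
    rintro x ⟨hx₀, hx⟩
    have hx₀p : |x 0| ^ p ≤ 1 := Real.rpow_le_one (abs_nonneg _) (abs_le.2 hx₀) hp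
    change ∑ j : Fin n, |x (Fin.succ j)| ^ p ≤ (n : ℝ) at hx
    change ∑ i, |x i| ^ p ≤ ((n + 1 : ℕ) : ℝ)
    rw [Fin.sum_univ_succ]
    push_cast
    linarith
  calc 2 * volume (lpBall p n)
      = volume (e ⁻¹' (Set.Icc (-1 : ℝ) 1 ×ˢ lpBall p n)) := by
        rw [(volume_preserving_piFinSuccAbove _ 0).measure_preimage hprod.nullMeasurableSet,
          Measure.volume_eq_prod, Measure.prod_prod, Real.volume_Icc]
        norm_num
    _ ≤ volume (lpBall p (n + 1)) := measure_mono hsub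

lemma monotone_volume_lpBall {p : ℝ} (hp : 0 ≤ p) : Monotone fun n => volume (lpBall p n) :=
  monotone_nat_of_le_succ fun n =>
    le_mul_of_one_le_left zero_le one_le_two |>.trans (two_mul_volume_lpBall_le hp n)

lemma cubeBall_eq_closedBall (n : ℕ) : cubeBall n = Metric.closedBall 0 1 := by
  ext x
  simp [cubeBall, pi_norm_le_iff_of_nonneg]

lemma volume_cubeBall_toReal (n : ℕ) : (volume (cubeBall n)).toReal = 2 ^ n := by
  rw [cubeBall_eq_closedBall, Real.volume_pi_closedBall 0 zero_le_one]
  simp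

/-- **Lemma 4.2.** The volumes `w_p(n) = vol(B_p^n)` approximately increase
in `n`: there is an absolute constant `C` with `w_p(k) ≤ C w_p(n)` for all
`1 ≤ k ≤ n` and `1 ≤ p ≤ ∞`. -/
theorem lpBall_volume_almost_increasing :
    ∃ C : ℝ, 0 < C ∧
      (∀ (p : ℝ), 1 ≤ p → ∀ (k n : ℕ), 1 ≤ k → k ≤ n →
        (volume (lpBall p k)).toReal ≤ C * (volume (lpBall p n)).toReal) ∧
      (∀ (k n : ℕ), 1 ≤ k → k ≤ n →
        (volume (cubeBall k)).toReal ≤ C * (volume (cubeBall n)).toReal) := by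
  refine ⟨1, one_pos, fun p hp k n _ hkn => ?_, fun k n _ hkn => ?_⟩
  · rw [one_mul]
    exact ENNReal.toReal_mono (volume_lpBall_lt_top (by linarith) n).ne
      (monotone_volume_lpBall (by linarith) hkn)
  · rw [one_mul, volume_cubeBall_toReal, volume_cubeBall_toReal]
    exact pow_le_pow_right₀ one_le_two hkn
end

section
/- For all 1 ≤ p ≤ ∞ and all n, the volume of B_p^n = {x ∈ ℝ^n : Σ|x(i)|^p ≤ n} satisfies c^n ≤ vol(B_p^n) ≤ C^n for absolute constants 0 < c ≤ C, i.e. c ≤ vol(B_p^n)^{1/n} ≤ C. -/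
open MeasureTheory

lemma cubeBall_eq (n : ℕ) :
    cubeBall n = Set.pi Set.univ (fun _ : Fin n => Set.Icc (-1:ℝ) 1) := by
  ext x
  simp only [cubeBall, Set.mem_setOf_eq, Set.mem_univ_pi, Set.mem_Icc, abs_le]

lemma cube_vol (n : ℕ) : volume (cubeBall n) = 2 ^ n := by
  rw [cubeBall_eq, volume_pi_pi]
  simp [Real.volume_Icc]
  norm_num

lemma cube_subset_lp {p : ℝ} (hp : 1 ≤ p) (n : ℕ) : cubeBall n ⊆ lpBall p n := by
  intro x hx
  have : ∀ i, |x i| ^ p ≤ 1 := fun i =>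
    Real.rpow_le_one (abs_nonneg _) (hx i) (by linarith)
  calc ∑ i, |x i| ^ p ≤ ∑ _i : Fin n, (1:ℝ) := Finset.sum_le_sum fun i _ => this i
    _ = n := by simp

lemma lp_subset_l1 {p : ℝ} (hp : 1 ≤ p) (n : ℕ) :
    lpBall p n ⊆ {x : Fin n → ℝ | ∑ i, |x i| ≤ (n:ℝ)} := by
  rcases Nat.eq_zero_or_pos n with rfl | hn
  · intro x _; simp
  intro x hx
  have hn' : (0:ℝ) < n := by exact_mod_cast hn
  have key := Real.arith_mean_le_rpow_mean (Finset.univ) (fun _ : Fin n => (n:ℝ)⁻¹)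
    (fun i => |x i|) (fun i _ => by positivity)
    (by simp [Finset.card_univ]; field_simp) (fun i _ => abs_nonneg _) hp
  have hsum : ∑ i, (n:ℝ)⁻¹ * |x i| ^ p ≤ 1 := by
    rw [← Finset.mul_sum]
    rw [inv_mul_le_iff₀ hn', mul_one]
    exact hx
  have h2 : (∑ i, (n:ℝ)⁻¹ * |x i| ^ p) ^ (1/p) ≤ 1 :=
    Real.rpow_le_one (Finset.sum_nonneg fun i _ => by positivity) hsum (by positivity)
  have h3 : ∑ i, (n:ℝ)⁻¹ * |x i| ≤ 1 := key.trans h2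
  rw [← Finset.mul_sum, inv_mul_le_iff₀ hn', mul_one] at h3
  exact h3

lemma l1_vol (n : ℕ) (hn : 0 < n) :
    volume {x : Fin n → ℝ | ∑ i, |x i| ≤ (n:ℝ)} =
      ENNReal.ofReal (n:ℝ) ^ n * ENNReal.ofReal (2 ^ n / n.factorial) := by
  have : Nonempty (Fin n) := ⟨⟨0, hn⟩⟩
  have h := MeasureTheory.volume_sum_rpow_le (Fin n) (p := 1) le_rfl (n : ℝ)
  simp only [Real.rpow_one, one_div_one, Fintype.card_fin] at h
  rw [show {x : Fin n → ℝ | ∑ i, |x i| ≤ (n:ℝ)} =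
      {x : Fin n → ℝ | (∑ i, |x i|) ^ (1:ℝ) ≤ (n:ℝ)} by ext x; simp [Real.rpow_one]]
  simp only [Real.rpow_one] at h ⊢
  rw [h]
  congr 1
  have g1 : Real.Gamma (1 + 1) = 1 := by
    rw [show (1:ℝ) + 1 = 2 by norm_num, Real.Gamma_two]
  have g2 : Real.Gamma ((n:ℝ)/1 + 1) = n.factorial := by
    rw [show ((n:ℝ)/1 + 1) = (n:ℝ) + 1 by ring]
    exact_mod_cast Real.Gamma_nat_eq_factorial n
  rw [g1, g2]
  norm_num

/-- The normalized balls `B_p^n` have volume of order `1` per dimension: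
there are absolute constants `0 < c ≤ C` with `c^n ≤ vol(B_p^n) ≤ C^n` for
all `1 ≤ p ≤ ∞` and all `n`. -/
theorem lpBall_volume_bounds :
    ∃ c C : ℝ, 0 < c ∧ c ≤ C ∧
      (∀ (p : ℝ), 1 ≤ p → ∀ n : ℕ,
        c ^ n ≤ (volume (lpBall p n)).toReal ∧
        (volume (lpBall p n)).toReal ≤ C ^ n) ∧
      (∀ n : ℕ,
        c ^ n ≤ (volume (cubeBall n)).toReal ∧
        (volume (cubeBall n)).toReal ≤ C ^ n) := by
  refine ⟨2, 2 * Real.exp 1, by norm_num, ?_, ?_, ?_⟩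
  · nlinarith [Real.exp_one_gt_d9]
  · intro p hp n
    rcases Nat.eq_zero_or_pos n with rfl | hn
    · have he : lpBall p 0 = Set.univ := by ext x; simp [lpBall]
      have hc : cubeBall 0 = Set.univ := by
        ext x; simp only [cubeBall, Set.mem_setOf_eq, Set.mem_univ, iff_true]
        exact fun i => i.elim0
      have hv : volume (Set.univ : Set (Fin 0 → ℝ)) = 1 := by
        rw [← hc, cube_vol]; norm_num
      rw [he, hv]
      simp
    have hl1 := l1_vol n hn
    have hub : volume (lpBall p n) ≤
        ENNReal.ofReal (n:ℝ) ^ n * ENNReal.ofReal (2 ^ n / n.factorial) := by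
      rw [← hl1]; exact measure_mono (lp_subset_l1 hp n)
    have hfin : volume (lpBall p n) ≠ ⊤ := by
      refine ne_top_of_le_ne_top ?_ hub
      exact ENNReal.mul_ne_top (by simp [ENNReal.pow_ne_top]) ENNReal.ofReal_ne_top
    constructor
    · have hsub : volume (cubeBall n) ≤ volume (lpBall p n) := measure_mono (cube_subset_lp hp n)
      rw [cube_vol n] at hsub
      have := ENNReal.toReal_mono hfin hsub
      simpa using this
    · have := ENNReal.toReal_mono (ENNReal.mul_ne_top (by simp) ENNReal.ofReal_ne_top) hub
      refine this.trans ?_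
      rw [ENNReal.toReal_mul, ENNReal.toReal_pow, ENNReal.toReal_ofReal (by positivity),
        ENNReal.toReal_ofReal (by positivity)]
      have hfact : (n:ℝ) ^ n / n.factorial ≤ Real.exp 1 ^ n := by
        rw [← Real.exp_nat_mul]
        simpa [Real.exp_nat_mul] using Real.pow_div_factorial_le_exp (x := (n:ℝ)) (by positivity) n
      calc (n:ℝ) ^ n * (2 ^ n / n.factorial)
          = ((n:ℝ) ^ n / n.factorial) * 2 ^ n := by ring
        _ ≤ Real.exp 1 ^ n * 2 ^ n := by
            apply mul_le_mul_of_nonneg_right hfact (by positivity)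
        _ = (2 * Real.exp 1) ^ n := by rw [mul_pow]; ring
  · intro n
    rw [cube_vol]
    constructor
    · simp
    · have h2 : (2:ℝ) ≤ 2 * Real.exp 1 := by nlinarith [Real.exp_one_gt_d9]
      calc ((2:ENNReal) ^ n).toReal = 2 ^ n := by simp
        _ ≤ (2 * Real.exp 1) ^ n := pow_le_pow_left₀ (by norm_num) h2 n
end

section
/- Every convex subset of ℝ^n is coordinate convex: if K ⊆ ℝ^n is convex, then every point x ∈ ℝ^n with the property that for each sign vector θ ∈ {−1,1}^n there exists y ∈ K with y(i) ≥ x(i) whenever θ(i) = 1 and y(i) ≤ x(i) whenever θ(i) = −1, already belongs to K. -/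
/-- Every convex subset of `ℝ^n` is coordinate convex: if for every sign
pattern `θ ∈ {−1,1}^n` (encoded by `θ : Fin n → Bool`) there is `y ∈ K` with
`y i ≥ x i` when `θ i` is positive and `y i ≤ x i` when `θ i` is negative,
then `x ∈ K`. -/
theorem convex_is_coordinate_convex (n : ℕ) (K : Set (Fin n → ℝ))
    (hK : Convex ℝ K) (x : Fin n → ℝ)
    (hx : ∀ θ : Fin n → Bool, ∃ y ∈ K,
      ∀ i, (θ i = true → x i ≤ y i) ∧ (θ i = false → y i ≤ x i)) :
    x ∈ K := by
  have aux : ∀ s : Finset (Fin n), ∀ θ : Fin n → Bool, ∃ y ∈ K,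
      (∀ i ∈ s, y i = x i) ∧
      ∀ i ∉ s, (θ i = true → x i ≤ y i) ∧ (θ i = false → y i ≤ x i) := by
    intro s
    induction s using Finset.induction_on with
    | empty =>
      intro θ
      obtain ⟨y, hy, h⟩ := hx θ
      exact ⟨y, hy, by simp, fun i _ => h i⟩
    | @insert a s ha ih =>
      intro θ
      obtain ⟨yp, hyp, hpe, hps⟩ := ih (Function.update θ a true)
      obtain ⟨ym, hym, hme, hms⟩ := ih (Function.update θ a false)
      have hpa : x a ≤ yp a := (hps a ha).1 (by simp)
      have hma : ym a ≤ x a := (hms a ha).2 (by simp)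
      set t : ℝ := (x a - ym a) / (yp a - ym a) with ht
      by_cases hne : ym a = yp a
      · have hxa : yp a = x a := le_antisymm (hne ▸ hma) hpa
        refine ⟨yp, hyp, ?_, ?_⟩
        · intro i hi
          rcases Finset.mem_insert.mp hi with h | h
          · exact h ▸ hxa
          · exact hpe i h
        · intro i hi
          have hia : i ≠ a := fun h => hi (h ▸ Finset.mem_insert_self a s)
          have his : i ∉ s := fun h => hi (Finset.mem_insert_of_mem h)
          have := hps i his
          rwa [Function.update_of_ne hia] at this
      · have hd : (0:ℝ) < yp a - ym a :=
          sub_pos.mpr (lt_of_le_of_ne (hma.trans hpa) hne)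
        have ht0 : 0 ≤ t := div_nonneg (by linarith) hd.le
        have ht1 : t ≤ 1 := (div_le_one hd).mpr (by linarith)
        have htm : t * (yp a - ym a) = x a - ym a := div_mul_cancel₀ _ hd.ne'
        refine ⟨t • yp + (1 - t) • ym, hK hyp hym ht0 (by linarith) (by ring), ?_, ?_⟩
        · intro i hi
          rcases Finset.mem_insert.mp hi with h | h
          · subst h
            simp only [Pi.add_apply, Pi.smul_apply, smul_eq_mul]
            linarith [htm]
          · simp only [Pi.add_apply, Pi.smul_apply, smul_eq_mul, hpe i h, hme i h]
            ring
        · intro i hi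
          have hia : i ≠ a := fun h => hi (h ▸ Finset.mem_insert_self a s)
          have his : i ∉ s := fun h => hi (Finset.mem_insert_of_mem h)
          have hp := hps i his
          have hm := hms i his
          rw [Function.update_of_ne hia] at hp hm
          constructor
          · intro hθ
            have h1 := hp.1 hθ
            have h2 := hm.1 hθ
            simp only [Pi.add_apply, Pi.smul_apply, smul_eq_mul]
            nlinarith
          · intro hθ
            have h1 := hp.2 hθ
            have h2 := hm.2 hθ
            simp only [Pi.add_apply, Pi.smul_apply, smul_eq_mul]
            nlinarith
  obtain ⟨y, hy, he, _⟩ := aux Finset.univ (fun _ => true)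
  have : y = x := funext fun i => he i (Finset.mem_univ i)
  exact this ▸ hy
end
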